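/- arXiv:math/0701435 — 9 statements merged into one kernel-verified Lean document; each statement's English description precedes it below -/
import Mathlib

section
/- For all 1 ≤ j < i ≤ c one has m_j ≤ (t+j−1)·u_{t,t+j−1} and M_i − m_j ≥ (i−j)·u_{t,t+c−i+j} > 0, and consequently m_j/(M_i − m_j) ≤ (t+j−1)/(i−j) as rational numbers. -/
/-!
Read column by column, `m j` and `M i` are sums along staircase paths through the degree
matrix: `m j` takes one entry from each of the columns `1, …, t + j - 1`, in row
`max (x + 1 - j) 1`, and `M i` one entry from each of the columns `c - i + 1, …, t + c - 1`,
in row `min (x - (c - i)) t`. After shifting the second path left by `c - i`, its first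
`t + j - 1` entries lie weakly below and to the right of those of the first path, and its last
`i - j` entries lie in row `t`, at columns at least `t + c - i + j`. Monotonicity of `u` in both
indices gives the two bounds, and the ratio bound is their quotient.
-/

open Finset

theorem Finset.sum_Icc_consecutive {M : Type*} [AddCommMonoid M] (f : ℕ → M) {a b c : ℕ}
    (hab : a ≤ b + 1) (hbc : b ≤ c) :
    ∑ x ∈ Icc a b, f x + ∑ x ∈ Icc (b + 1) c, f x = ∑ x ∈ Icc a c, f x := by
  simp only [← Ico_add_one_right_eq_Icc]
  exact sum_Ico_consecutive f hab (by omega)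

theorem Finset.sum_Icc_add_right {M : Type*} [AddCommMonoid M] (f : ℕ → M) (a b s : ℕ) :
    ∑ x ∈ Icc a b, f (x + s) = ∑ y ∈ Icc (a + s) (b + s), f y := by
  rw [← map_add_right_Icc, sum_map]
  rfl

theorem Nat.monotoneOn_Icc_of_le_succ {β : Type*} [Preorder β] {f : ℕ → β} {a b : ℕ}
    (hf : ∀ k, a ≤ k → k + 1 ≤ b → f k ≤ f (k + 1)) : MonotoneOn f (Set.Icc a b) :=
  monotoneOn_of_le_succ Set.ordConnected_Icc fun k _ hk hk' ↦ by
    simp only [Order.succ_eq_add_one, Set.mem_Icc] at hk hk' ⊢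
    exact hf k hk.1 hk'.2

def IsMonotoneOnRect (u : ℕ → ℕ → ℕ) (t n : ℕ) : Prop :=
  ∀ ⦃r r' x x' : ℕ⦄, 1 ≤ r → r ≤ r' → r' ≤ t → 1 ≤ x → x ≤ x' → x' ≤ n → u r x ≤ u r' x'

theorem isMonotoneOnRect_of_le_succ {u : ℕ → ℕ → ℕ} {t n : ℕ}
    (hrow : ∀ i j, 1 ≤ i → i + 1 ≤ t → 1 ≤ j → j ≤ n → u i j ≤ u (i + 1) j)
    (hcol : ∀ i j, 1 ≤ i → i ≤ t → 1 ≤ j → j + 1 ≤ n → u i j ≤ u i (j + 1)) :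
    IsMonotoneOnRect u t n := by
  intro r r' x x' hr hrr' hr' hx hxx' hx'
  have hcolumn : MonotoneOn (u · x') (Set.Icc 1 t) :=
    Nat.monotoneOn_Icc_of_le_succ fun k hk hkt ↦ hrow k x' hk hkt (hx.trans hxx') hx'
  have hrow : MonotoneOn (u r) (Set.Icc 1 n) :=
    Nat.monotoneOn_Icc_of_le_succ fun k hk hkn ↦ hcol r k hr (hrr'.trans hr') hk hkn
  calc u r x ≤ u r x' := hrow ⟨hx, hxx'.trans hx'⟩ ⟨hx.trans hxx', hx'⟩ hxx'
    _ ≤ u r' x' := hcolumn ⟨hr, hrr'.trans hr'⟩ ⟨hr.trans hrr', hr'⟩ hrr'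

theorem sum_first_row_add_diagonal_eq (u : ℕ → ℕ → ℕ) {t j : ℕ} (ht : 1 ≤ t) (hj : 1 ≤ j) :
    ∑ x ∈ Icc 1 j, u 1 x + ∑ k ∈ Icc 2 t, u k (j + k - 1) =
      ∑ x ∈ Icc 1 (t + j - 1), u (max (x + 1 - j) 1) x := by
  rw [← sum_Icc_consecutive _ (by omega : 1 ≤ j + 1) (by omega : j ≤ t + j - 1)]
  congr 1
  · refine sum_congr rfl fun x hx ↦ ?_
    rw [mem_Icc] at hx
    rw [show max (x + 1 - j) 1 = 1 by omega]
  · rw [show j + 1 = 2 + (j - 1) by omega, show t + j - 1 = t + (j - 1) by omega,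
      ← sum_Icc_add_right]
    refine sum_congr rfl fun k hk ↦ ?_
    rw [mem_Icc] at hk
    rw [show max (k + (j - 1) + 1 - j) 1 = k by omega, show k + (j - 1) = j + k - 1 by omega]

theorem sum_diagonal_add_last_row_eq (u : ℕ → ℕ → ℕ) {t c i : ℕ} (hi : 1 ≤ i) (hic : i ≤ c) :
    ∑ k ∈ Icc 1 t, u k (c - i + k) + ∑ y ∈ Icc (t + c - i + 1) (t + c - 1), u t y =
      ∑ x ∈ Icc 1 (t + i - 1), u (min x t) (x + (c - i)) := by
  rw [← sum_Icc_consecutive _ (by omega : 1 ≤ t + 1) (by omega : t ≤ t + i - 1)]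
  congr 1
  · refine sum_congr rfl fun k hk ↦ ?_
    rw [mem_Icc] at hk
    rw [min_eq_left hk.2, add_comm]
  · rw [show t + c - i + 1 = t + 1 + (c - i) by omega,
      show t + c - 1 = t + i - 1 + (c - i) by omega, ← sum_Icc_add_right]
    refine sum_congr rfl fun x hx ↦ ?_
    rw [mem_Icc] at hx
    rw [min_eq_right (by omega)]

section Staircase

variable {u : ℕ → ℕ → ℕ} {t n : ℕ}

theorem sum_staircase_le (hu : IsMonotoneOnRect u t n) (ht : 1 ≤ t) {j : ℕ}
    (hn : t + j - 1 ≤ n) :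
    ∑ x ∈ Icc 1 (t + j - 1), u (max (x + 1 - j) 1) x ≤ (t + j - 1) * u t (t + j - 1) := by
  have hle : ∀ x ∈ Icc 1 (t + j - 1), u (max (x + 1 - j) 1) x ≤ u t (t + j - 1) := by
    intro x hx
    rw [mem_Icc] at hx
    exact hu (by omega) (by omega) le_rfl hx.1 hx.2 hn
  simpa using sum_le_card_nsmul _ _ _ hle

theorem sum_staircase_add_mul_le (hu : IsMonotoneOnRect u t n) (ht : 1 ≤ t) {i j s : ℕ}
    (hj : 1 ≤ j) (hji : j ≤ i) (hn : t + i - 1 + s ≤ n) :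
    ∑ x ∈ Icc 1 (t + j - 1), u (max (x + 1 - j) 1) x + (i - j) * u t (t + j + s) ≤
      ∑ x ∈ Icc 1 (t + i - 1), u (min x t) (x + s) := by
  rw [← sum_Icc_consecutive _ (by omega : 1 ≤ t + j - 1 + 1) (by omega : t + j - 1 ≤ t + i - 1)]
  gcongr with x hx x hx
  · rw [mem_Icc] at hx
    exact hu (by omega) (by omega) (by omega) hx.1 (by omega) (by omega)
  · have hle : ∀ x ∈ Icc (t + j - 1 + 1) (t + i - 1), u t (t + j + s) ≤ u (min x t) (x + s) := by
      intro x hx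
      rw [mem_Icc] at hx
      rw [min_eq_right (by omega)]
      exact hu ht le_rfl le_rfl (by omega) (by omega) (by omega)
    simpa [show t + i - 1 + 1 - (t + j - 1 + 1) = i - j by omega] using card_nsmul_le_sum _ _ _ hle

end Staircase

theorem div_sub_le_div_of_le_mul_of_add_mul_le {K : Type*} [Field K] [LinearOrder K]
    [IsStrictOrderedRing K] {a b p q v w : K} (hp : 0 ≤ p) (hq : 0 < q) (hw : 0 < w)
    (hvw : v ≤ w) (ha : a ≤ p * v) (hb : a + q * w ≤ b) : a / (b - a) ≤ p / q := by
  have hba : q * w ≤ b - a := by linarith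
  rw [div_le_div_iff₀ (by nlinarith) hq]
  calc a * q ≤ p * v * q := by gcongr
    _ ≤ p * w * q := by gcongr
    _ = p * (q * w) := by ring
    _ ≤ p * (b - a) := by gcongr

theorem ratio_bound_first_factors_general (t c : ℕ) (ht : 1 ≤ t)
    (u : ℕ → ℕ → ℕ)
    (hpos : ∀ i j, 1 ≤ i → i ≤ t → 1 ≤ j → j ≤ t + c - 1 → 0 < u i j)
    (hrow : ∀ i j, 1 ≤ i → i + 1 ≤ t → 1 ≤ j → j ≤ t + c - 1 → u i j ≤ u (i + 1) j)
    (hcol : ∀ i j, 1 ≤ i → i ≤ t → 1 ≤ j → j + 1 ≤ t + c - 1 → u i j ≤ u i (j + 1))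
    (m M : ℕ → ℕ)
    (hm : ∀ i, 1 ≤ i → i ≤ c →
      m i = (∑ j ∈ Finset.Icc 1 i, u 1 j) + ∑ k ∈ Finset.Icc 2 t, u k (i + k - 1))
    (hM : ∀ i, 1 ≤ i → i ≤ c →
      M i = (∑ k ∈ Finset.Icc 1 t, u k (c - i + k)) +
        ∑ j ∈ Finset.Icc (t + c - i + 1) (t + c - 1), u t j) :
    ∀ i j, 1 ≤ j → j < i → i ≤ c →
      m j ≤ (t + j - 1) * u t (t + j - 1) ∧
      m j + (i - j) * u t (t + c - i + j) ≤ M i ∧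
      0 < (i - j) * u t (t + c - i + j) ∧
      (m j : ℚ) / ((M i : ℚ) - (m j : ℚ)) ≤ ((t : ℚ) + j - 1) / ((i : ℚ) - j) := by
  intro i j hj hji hic
  have hu := isMonotoneOnRect_of_le_succ hrow hcol
  have hm_eq := hm j hj (by omega)
  rw [sum_first_row_add_diagonal_eq u ht hj] at hm_eq
  have hmj : m j ≤ (t + j - 1) * u t (t + j - 1) :=
    hm_eq ▸ sum_staircase_le hu ht (by omega)
  have hMi : m j + (i - j) * u t (t + c - i + j) ≤ M i := by
    rw [hm_eq, hM i (by omega) hic, sum_diagonal_add_last_row_eq u (by omega) hic,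
      show t + c - i + j = t + j + (c - i) by omega]
    exact sum_staircase_add_mul_le hu ht hj hji.le (by omega)
  have hw : 0 < u t (t + c - i + j) := hpos t _ ht le_rfl (by omega) (by omega)
  refine ⟨hmj, hMi, Nat.mul_pos (by omega) hw, ?_⟩
  have hcast_t : ((t + j - 1 : ℕ) : ℚ) = t + j - 1 := by
    rw [Nat.cast_sub (by omega)]
    push_cast
    rfl
  have hcast_i : ((i - j : ℕ) : ℚ) = i - j := Nat.cast_sub hji.le
  rw [← hcast_t, ← hcast_i]
  exact div_sub_le_div_of_le_mul_of_add_mul_le (v := (u t (t + j - 1) : ℚ))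
    (w := (u t (t + c - i + j) : ℚ)) (Nat.cast_nonneg _)
    (by exact_mod_cast Nat.sub_pos_of_lt hji) (by exact_mod_cast hw)
    (by exact_mod_cast hu ht le_rfl le_rfl (by omega) (by omega) (by omega))
    (by exact_mod_cast hmj) (by exact_mod_cast hMi)

/-- For the degree matrix `u` of a standard determinantal ideal of codimension `c`,
for all `1 ≤ j < i ≤ c` one has `m j ≤ (t+j−1)·u_{t,t+j−1}`,
`M i − m j ≥ (i−j)·u_{t,t+c−i+j} > 0`, and consequently
`m j/(M i − m j) ≤ (t+j−1)/(i−j)` as rational numbers. -/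
theorem ratio_bound_first_factors (t c : ℕ) (ht : 1 ≤ t) (hc : 1 ≤ c)
    (u : ℕ → ℕ → ℕ)
    (hpos : ∀ i j, 1 ≤ i → i ≤ t → 1 ≤ j → j ≤ t + c - 1 → 0 < u i j)
    (hrow : ∀ i j, 1 ≤ i → i + 1 ≤ t → 1 ≤ j → j ≤ t + c - 1 → u i j ≤ u (i + 1) j)
    (hcol : ∀ i j, 1 ≤ i → i ≤ t → 1 ≤ j → j + 1 ≤ t + c - 1 → u i j ≤ u i (j + 1))
    (m M : ℕ → ℕ)
    (hm : ∀ i, 1 ≤ i → i ≤ c →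
      m i = (∑ j ∈ Finset.Icc 1 i, u 1 j) + ∑ k ∈ Finset.Icc 2 t, u k (i + k - 1))
    (hM : ∀ i, 1 ≤ i → i ≤ c →
      M i = (∑ k ∈ Finset.Icc 1 t, u k (c - i + k)) +
        ∑ j ∈ Finset.Icc (t + c - i + 1) (t + c - 1), u t j) :
    ∀ i j, 1 ≤ j → j < i → i ≤ c →
      m j ≤ (t + j - 1) * u t (t + j - 1) ∧
      m j + (i - j) * u t (t + c - i + j) ≤ M i ∧
      0 < (i - j) * u t (t + c - i + j) ∧
      (m j : ℚ) / ((M i : ℚ) - (m j : ℚ)) ≤ ((t : ℚ) + j - 1) / ((i : ℚ) - j) :=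
  ratio_bound_first_factors_general t c ht u hpos hrow hcol m M hm hM
end

section
/- For all 1 ≤ i < j ≤ c one has M_j − m_i ≥ u_{t,t+c+i−j} + u_{t,t+c+i−j+1} + ⋯ + u_{t,t+c−1} ≥ (j−i)·u_{t,t+c+i−j} > 0, and consequently m_j/(M_j − m_i) ≤ (t+j−1)/(j−i) as rational numbers. -/
/-!
Both `m_i` and `M_j` are sums of `u` along lattice paths. Listing the entries of each path in the
order they are visited, the `r`-th entry on the path of `m_i` lies weakly above and to the left of
the `r`-th entry on the path of `M_j`, so by monotonicity `m_i` is at most the first `t + i - 1`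
terms of `M_j`; the remaining `j - i` terms are `u_{t,t+c+i-j}, …, u_{t,t+c-1}`. Each of these is at
least `u_{t,t+c+i-j}` while each of the first `t + i - 1` terms is at most it, whence
`(j - i) M_j ≤ (t + j - 1) (M_j - m_i)`; together with `m_j ≤ M_j` this is the ratio bound.
-/

open Finset

namespace Finset

variable {M : Type*} [AddCommMonoid M]

theorem sum_Icc_consecutive_s4 (f : ℕ → M) {m n k : ℕ} (hmn : m ≤ n + 1) (hnk : n ≤ k) :
    (∑ x ∈ Icc m n, f x) + ∑ x ∈ Icc (n + 1) k, f x = ∑ x ∈ Icc m k, f x := by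
  simp only [← Ico_add_one_right_eq_Icc]
  exact sum_Ico_consecutive f hmn (by omega)

theorem sum_Icc_add_right_s4 (f : ℕ → M) (a b c : ℕ) :
    ∑ x ∈ Icc a b, f (x + c) = ∑ x ∈ Icc (a + c) (b + c), f x := by
  rw [← map_add_right_Icc, sum_map]
  rfl

end Finset

theorem monotoneOn_uncurry_of_le_succ {t n : ℕ} {u : ℕ → ℕ → ℕ}
    (hrow : ∀ i j, 1 ≤ i → i + 1 ≤ t → 1 ≤ j → j ≤ n → u i j ≤ u (i + 1) j)
    (hcol : ∀ i j, 1 ≤ i → i ≤ t → 1 ≤ j → j + 1 ≤ n → u i j ≤ u i (j + 1)) :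
    MonotoneOn (Function.uncurry u) (Set.Icc (1, 1) (t, n)) := by
  rintro ⟨a, b⟩ ⟨⟨ha, hb⟩, hat, hbn⟩ ⟨a', b'⟩ ⟨⟨-, hb'⟩, ha't, hb'n⟩ ⟨haa', hbb'⟩
  have hcol_a : MonotoneOn (u a) (Set.Icc 1 n) :=
    monotoneOn_of_le_succ Set.ordConnected_Icc fun y _ hy hy' => by
      simp only [Set.mem_Icc, Order.succ_eq_add_one] at hy hy' ⊢
      exact hcol a y ha hat hy.1 hy'.2
  have hrow_b' : MonotoneOn (u · b') (Set.Icc 1 t) :=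
    monotoneOn_of_le_succ Set.ordConnected_Icc fun x _ hx hx' => by
      simp only [Set.mem_Icc, Order.succ_eq_add_one] at hx hx' ⊢
      exact hrow x b' hx.1 hx'.2 hb' hb'n
  exact (hcol_a ⟨hb, hbn⟩ ⟨hb', hb'n⟩ hbb').trans (hrow_b' ⟨ha, hat⟩ ⟨ha.trans haa', ha't⟩ haa')

section Shifts

variable {t c : ℕ} {u : ℕ → ℕ → ℕ}

/-- The row `r - i + 1` is `max 1 (r - i + 1)` by truncated subtraction: the path runs along the
first row up to column `i` and then diagonally. -/
def minShift (t : ℕ) (u : ℕ → ℕ → ℕ) (i : ℕ) : ℕ :=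
  ∑ r ∈ Icc 1 (t + i - 1), u (r - i + 1) r

def maxShift (t c : ℕ) (u : ℕ → ℕ → ℕ) (j : ℕ) : ℕ :=
  ∑ r ∈ Icc 1 (t + j - 1), u (min r t) (c - j + r)

theorem sum_eq_minShift {i : ℕ} (ht : 1 ≤ t) (hi : 1 ≤ i) :
    (∑ j ∈ Icc 1 i, u 1 j) + ∑ k ∈ Icc 2 t, u k (i + k - 1) = minShift t u i := by
  rw [minShift, ← sum_Icc_consecutive_s4 (fun r => u (r - i + 1) r) (n := i) (by omega) (by omega)]
  congr 1
  · refine sum_congr rfl fun r hr => ?_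
    rw [mem_Icc] at hr
    rw [show r - i + 1 = 1 by omega]
  · have := sum_Icc_add_right_s4 (fun r => u (r - i + 1) r) 2 t (i - 1)
    rw [show 2 + (i - 1) = i + 1 by omega, show t + (i - 1) = t + i - 1 by omega] at this
    rw [← this]
    refine sum_congr rfl fun k hk => ?_
    rw [mem_Icc] at hk
    congr 1 <;> omega

theorem maxShift_eq_add {i j : ℕ} (ht : 1 ≤ t) (hij : i ≤ j) (hjc : j ≤ c) :
    maxShift t c u j = (∑ r ∈ Icc 1 (t + i - 1), u (min r t) (c - j + r)) +
      ∑ s ∈ Icc (t + c + i - j) (t + c - 1), u t s := by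
  rw [maxShift, ← sum_Icc_consecutive_s4 (fun r => u (min r t) (c - j + r)) (n := t + i - 1)
    (by omega) (by omega)]
  congr 1
  have := sum_Icc_add_right_s4 (u t) (t + i - 1 + 1) (t + j - 1) (c - j)
  rw [show t + i - 1 + 1 + (c - j) = t + c + i - j by omega,
    show t + j - 1 + (c - j) = t + c - 1 by omega] at this
  rw [← this]
  refine sum_congr rfl fun r hr => ?_
  rw [mem_Icc] at hr
  rw [min_eq_right (by omega), add_comm]

theorem sum_eq_maxShift {j : ℕ} (ht : 1 ≤ t) (hj : 1 ≤ j) (hjc : j ≤ c) :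
    (∑ k ∈ Icc 1 t, u k (c - j + k)) + ∑ s ∈ Icc (t + c - j + 1) (t + c - 1), u t s =
      maxShift t c u j := by
  rw [maxShift_eq_add ht hj hjc, show t + c + 1 - j = t + c - j + 1 by omega, Nat.add_sub_cancel]
  congr 1
  refine sum_congr rfl fun r hr => ?_
  rw [mem_Icc] at hr
  rw [min_eq_left hr.2]

variable (hu : MonotoneOn (Function.uncurry u) (Set.Icc (1, 1) (t, t + c - 1)))
include hu

theorem minShift_add_le_maxShift {i j : ℕ} (ht : 1 ≤ t) (hi : 1 ≤ i) (hij : i ≤ j) (hjc : j ≤ c) :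
    minShift t u i + ∑ s ∈ Icc (t + c + i - j) (t + c - 1), u t s ≤ maxShift t c u j := by
  rw [maxShift_eq_add ht hij hjc, minShift]
  gcongr with r hr
  rw [mem_Icc] at hr
  exact hu (a := (r - i + 1, r)) (b := (min r t, c - j + r))
    ⟨⟨by omega, hr.1⟩, by omega, by omega⟩ ⟨⟨by omega, by omega⟩, by omega, by omega⟩
    ⟨by omega, by omega⟩

theorem minShift_le_maxShift {j : ℕ} (ht : 1 ≤ t) (hj : 1 ≤ j) (hjc : j ≤ c) :
    minShift t u j ≤ maxShift t c u j :=
  le_of_add_le_left (minShift_add_le_maxShift hu ht hj le_rfl hjc)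

theorem maxShift_le {i j : ℕ} (ht : 1 ≤ t) (hij : i < j) (hjc : j ≤ c) :
    maxShift t c u j ≤
      (t + i - 1) * u t (t + c + i - j) + ∑ s ∈ Icc (t + c + i - j) (t + c - 1), u t s := by
  rw [maxShift_eq_add ht hij.le hjc]
  gcongr
  calc ∑ r ∈ Icc 1 (t + i - 1), u (min r t) (c - j + r)
      ≤ #(Icc 1 (t + i - 1)) • u t (t + c + i - j) := sum_le_card_nsmul _ _ _ fun r hr => by
        rw [mem_Icc] at hr
        exact hu (a := (min r t, c - j + r)) (b := (t, t + c + i - j))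
          ⟨⟨by omega, by omega⟩, by omega, by omega⟩ ⟨⟨ht, by omega⟩, le_rfl, by omega⟩
          ⟨by omega, by omega⟩
    _ = (t + i - 1) * u t (t + c + i - j) := by simp

theorem card_mul_le_sum_Icc {i j : ℕ} (ht : 1 ≤ t) (hij : i < j) (hjc : j ≤ c) :
    (j - i) * u t (t + c + i - j) ≤ ∑ s ∈ Icc (t + c + i - j) (t + c - 1), u t s := by
  calc (j - i) * u t (t + c + i - j)
        = #(Icc (t + c + i - j) (t + c - 1)) • u t (t + c + i - j) := by
        rw [Nat.card_Icc, smul_eq_mul]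
        congr 1
        omega
    _ ≤ _ := card_nsmul_le_sum _ _ _ fun s hs => by
        rw [mem_Icc] at hs
        exact hu (a := (t, t + c + i - j)) (b := (t, s))
          ⟨⟨ht, by omega⟩, le_rfl, by omega⟩ ⟨⟨ht, by omega⟩, le_rfl, by omega⟩ ⟨le_rfl, hs.1⟩

end Shifts

theorem div_sub_le_div_of_le {a b M T x r q : ℕ} (ha : a ≤ M) (hb : b + T ≤ M)
    (hM : M ≤ r * x + T) (hx : q * x ≤ T) (hT : 0 < T) (hq : 0 < q) :
    (a : ℚ) / (M - b) ≤ (r + q) / q := by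
  have hqM : q * M ≤ (r + q) * T :=
    calc q * M ≤ q * (r * x + T) := Nat.mul_le_mul_left q hM
      _ = r * (q * x) + q * T := by ring
      _ ≤ r * T + q * T := by gcongr
      _ = (r + q) * T := by ring
  have hD : (T : ℚ) ≤ M - b := by
    rw [le_sub_iff_add_le']
    exact_mod_cast hb
  have hT' : (0 : ℚ) < T := by exact_mod_cast hT
  rw [div_le_div_iff₀ (hT'.trans_le hD) (by exact_mod_cast hq)]
  calc (a : ℚ) * q ≤ q * M := by rw [mul_comm]; gcongr
    _ ≤ (r + q) * T := by exact_mod_cast hqM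
    _ ≤ (r + q) * (M - b) := by gcongr

theorem ratio_bound_second_factors_general (t c : ℕ) (ht : 1 ≤ t)
    (u : ℕ → ℕ → ℕ)
    (hpos : ∀ i j, 1 ≤ i → i ≤ t → 1 ≤ j → j ≤ t + c - 1 → 0 < u i j)
    (hrow : ∀ i j, 1 ≤ i → i + 1 ≤ t → 1 ≤ j → j ≤ t + c - 1 → u i j ≤ u (i + 1) j)
    (hcol : ∀ i j, 1 ≤ i → i ≤ t → 1 ≤ j → j + 1 ≤ t + c - 1 → u i j ≤ u i (j + 1))
    (m M : ℕ → ℕ)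
    (hm : ∀ i, 1 ≤ i → i ≤ c →
      m i = (∑ j ∈ Finset.Icc 1 i, u 1 j) + ∑ k ∈ Finset.Icc 2 t, u k (i + k - 1))
    (hM : ∀ i, 1 ≤ i → i ≤ c →
      M i = (∑ k ∈ Finset.Icc 1 t, u k (c - i + k)) +
        ∑ j ∈ Finset.Icc (t + c - i + 1) (t + c - 1), u t j) :
    ∀ i j, 1 ≤ i → i < j → j ≤ c →
      m i + (∑ s ∈ Finset.Icc (t + c + i - j) (t + c - 1), u t s) ≤ M j ∧
      (j - i) * u t (t + c + i - j) ≤ ∑ s ∈ Finset.Icc (t + c + i - j) (t + c - 1), u t s ∧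
      0 < (j - i) * u t (t + c + i - j) ∧
      (m j : ℚ) / ((M j : ℚ) - (m i : ℚ)) ≤ ((t : ℚ) + j - 1) / ((j : ℚ) - i) := by
  intro i j hi hij hjc
  have hu := monotoneOn_uncurry_of_le_succ hrow hcol
  rw [hm i hi (by omega), hm j (by omega) hjc, hM j (by omega) hjc, sum_eq_minShift ht hi,
    sum_eq_minShift ht (by omega), sum_eq_maxShift ht (by omega) hjc]
  have hsum := minShift_add_le_maxShift hu ht hi hij.le hjc
  have htail := card_mul_le_sum_Icc hu ht hij hjc
  have hcorner : 0 < (j - i) * u t (t + c + i - j) :=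
    Nat.mul_pos (by omega) (hpos t _ ht le_rfl (by omega) (by omega))
  refine ⟨hsum, htail, hcorner, ?_⟩
  convert div_sub_le_div_of_le (minShift_le_maxShift hu ht (by omega) hjc) hsum
    (maxShift_le hu ht hij hjc) htail (hcorner.trans_le htail) (Nat.sub_pos_of_lt hij) using 2 <;>
    push_cast [Nat.cast_sub (by omega : 1 ≤ t + i), Nat.cast_sub hij.le] <;> ring

/-- For the degree matrix `u` of a standard determinantal ideal of codimension `c`,
for all `1 ≤ i < j ≤ c` one has
`M j − m i ≥ u_{t,t+c+i−j} + ⋯ + u_{t,t+c−1} ≥ (j−i)·u_{t,t+c+i−j} > 0`,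
and consequently `m j/(M j − m i) ≤ (t+j−1)/(j−i)` as rational numbers. -/
theorem ratio_bound_second_factors (t c : ℕ) (ht : 1 ≤ t) (hc : 1 ≤ c)
    (u : ℕ → ℕ → ℕ)
    (hpos : ∀ i j, 1 ≤ i → i ≤ t → 1 ≤ j → j ≤ t + c - 1 → 0 < u i j)
    (hrow : ∀ i j, 1 ≤ i → i + 1 ≤ t → 1 ≤ j → j ≤ t + c - 1 → u i j ≤ u (i + 1) j)
    (hcol : ∀ i j, 1 ≤ i → i ≤ t → 1 ≤ j → j + 1 ≤ t + c - 1 → u i j ≤ u i (j + 1))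
    (m M : ℕ → ℕ)
    (hm : ∀ i, 1 ≤ i → i ≤ c →
      m i = (∑ j ∈ Finset.Icc 1 i, u 1 j) + ∑ k ∈ Finset.Icc 2 t, u k (i + k - 1))
    (hM : ∀ i, 1 ≤ i → i ≤ c →
      M i = (∑ k ∈ Finset.Icc 1 t, u k (c - i + k)) +
        ∑ j ∈ Finset.Icc (t + c - i + 1) (t + c - 1), u t j) :
    ∀ i j, 1 ≤ i → i < j → j ≤ c →
      m i + (∑ s ∈ Finset.Icc (t + c + i - j) (t + c - 1), u t s) ≤ M j ∧
      (j - i) * u t (t + c + i - j) ≤ ∑ s ∈ Finset.Icc (t + c + i - j) (t + c - 1), u t s ∧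
      0 < (j - i) * u t (t + c + i - j) ∧
      (m j : ℚ) / ((M j : ℚ) - (m i : ℚ)) ≤ ((t : ℚ) + j - 1) / ((j : ℚ) - i) :=
  ratio_bound_second_factors_general t c ht u hpos hrow hcol m M hm hM
end

section
/- (Theorem 2.4, lower bound, arithmetic form.) For every 1 ≤ i ≤ c the denominators M_i − m_j (for 1 ≤ j < i) and M_j − m_i (for i < j ≤ c) are positive, and ∏_{1≤j<i} m_j/(M_i − m_j) · ∏_{i<j≤c} m_j/(M_j − m_i) ≤ C(t+c−1, t+i−1) · C(t+i−2, i−1), the right-hand side being the i-th total Betti number of a standard determinantal ideal with degree matrix u. -/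
/-!
Both shifts are sums of `t + i - 1` entries of `u` along staircase paths: `m a` runs along the
first row up to column `a` and then down a diagonal, `M b` runs down the diagonal starting at
column `c - b + 1` and then along the last row. For `a ≤ b` the path of `m a` lies entrywise
below the first `t + a - 1` entries of the path of `M b`, and the entries of the latter increase,
so the average entry of `m a` is at most the average entry of `M b`:
`(t + b - 1) * m a ≤ (t + a - 1) * M b`. This bounds `m j / (M i - m j)` by `(t + j - 1) / (i - j)`
for `j < i` and `m j / (M j - m i)` by `(t + j - 1) / (j - i)` for `j > i`, and the two products of
these bounds are `C(t + i - 2, i - 1)` and `C(t + c - 1, t + i - 1)`.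
-/

open Finset

lemma monotoneOn_uncurry_of_le_add_one {α : Type*} [Preorder α] {u : ℕ → ℕ → α} {p q : ℕ}
    (hrow : ∀ i j, 1 ≤ i → i + 1 ≤ p → 1 ≤ j → j ≤ q → u i j ≤ u (i + 1) j)
    (hcol : ∀ i j, 1 ≤ i → i ≤ p → 1 ≤ j → j + 1 ≤ q → u i j ≤ u i (j + 1)) :
    MonotoneOn (Function.uncurry u) (Set.Icc 1 p ×ˢ Set.Icc 1 q) := by
  have hr : ∀ j ∈ Set.Icc 1 q, MonotoneOn (u · j) (Set.Icc 1 p) := fun j hj =>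
    monotoneOn_of_le_succ Set.ordConnected_Icc fun i _ hi hi' =>
      hrow i j hi.1 hi'.2 hj.1 hj.2
  have hc : ∀ i ∈ Set.Icc 1 p, MonotoneOn (u i) (Set.Icc 1 q) := fun i hi =>
    monotoneOn_of_le_succ Set.ordConnected_Icc fun j _ hj hj' =>
      hcol i j hi.1 hi.2 hj.1 hj'.2
  rintro ⟨i, j⟩ ⟨hi, hj⟩ ⟨i', j'⟩ ⟨hi', hj'⟩ ⟨hii', hjj'⟩
  exact (hc i hi hj hj' hjj').trans (hr j' hj' hi hi' hii')

lemma mul_sum_Ioc_le_mul_sum_Ioc {R : Type*} [CommSemiring R] [PartialOrder R]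
    [IsOrderedRing R] {y : ℕ → R} {n n' : ℕ} (hy : MonotoneOn y (Set.Icc 1 n')) (hn : n ≤ n') :
    n' * ∑ s ∈ Ioc 0 n, y s ≤ n * ∑ s ∈ Ioc 0 n', y s := by
  rcases Nat.eq_zero_or_pos n with rfl | hn0
  · simp
  set H := ∑ s ∈ Ioc 0 n, y s
  set T := ∑ s ∈ Ioc n n', y s
  -- `y n` separates the entries summed in `H` from those summed in `T`
  have hH : H ≤ n * y n := by
    simpa using sum_le_card_nsmul (Ioc 0 n) y (y n) fun s hs => by
      rw [mem_Ioc] at hs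
      exact hy ⟨by omega, by omega⟩ ⟨hn0, hn⟩ hs.2
  have hT : (n' - n : ℕ) * y n ≤ T := by
    simpa using card_nsmul_le_sum (Ioc n n') y (y n) fun s hs => by
      rw [mem_Ioc] at hs
      exact hy ⟨hn0, hn⟩ ⟨by omega, hs.2⟩ hs.1.le
  calc (n' : R) * H = n * H + (n' - n : ℕ) * H := by
        rw [← add_mul, ← Nat.cast_add, Nat.add_sub_cancel' hn]
    _ ≤ n * H + (n' - n : ℕ) * (n * y n) := by gcongr
    _ = n * H + n * ((n' - n : ℕ) * y n) := by ring
    _ ≤ n * H + n * T := by gcongr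
    _ = n * ∑ s ∈ Ioc 0 n', y s := by
        rw [← mul_add, sum_Ioc_consecutive _ (Nat.zero_le n) hn]

/- The staircase paths are indexed by the column step `s`; in the path of `m a`, truncated
subtraction keeps the row `s - a + 1` at `1` while `s ≤ a`. -/

lemma sum_Icc_add_sum_Icc_eq_sum_Ioc_lowerPath (u : ℕ → ℕ → ℕ) {t a : ℕ} (ht : 1 ≤ t)
    (ha : 1 ≤ a) :
    (∑ j ∈ Icc 1 a, u 1 j) + ∑ k ∈ Icc 2 t, u k (a + k - 1) =
      ∑ s ∈ Ioc 0 (t + a - 1), u (s - a + 1) s := by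
  rw [← sum_Ioc_consecutive _ (Nat.zero_le a) (by omega : a ≤ t + a - 1)]
  congr 1
  · refine sum_congr (by ext; simp only [mem_Icc, mem_Ioc]; omega) fun s hs => ?_
    rw [mem_Ioc] at hs
    rw [show s - a + 1 = 1 by omega]
  · refine sum_nbij' (· + a - 1) (· + 1 - a) ?_ ?_ ?_ ?_ ?_ <;> intro k hk <;>
      simp only [mem_Icc, mem_Ioc] at hk ⊢ <;> first | omega | congr 1 <;> omega

lemma sum_Icc_add_sum_Icc_eq_sum_Ioc_upperPath (u : ℕ → ℕ → ℕ) {t c b : ℕ} (hb : 1 ≤ b)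
    (hbc : b ≤ c) :
    (∑ k ∈ Icc 1 t, u k (c - b + k)) + ∑ j ∈ Icc (t + c - b + 1) (t + c - 1), u t j =
      ∑ s ∈ Ioc 0 (t + b - 1), u (min s t) (c - b + s) := by
  rw [← sum_Ioc_consecutive _ (Nat.zero_le t) (by omega : t ≤ t + b - 1)]
  congr 1
  · refine sum_congr (by ext; simp only [mem_Icc, mem_Ioc]; omega) fun s hs => ?_
    rw [mem_Ioc] at hs
    rw [min_eq_left hs.2]
  · refine sum_nbij' (· + b - c) (c - b + ·) ?_ ?_ ?_ ?_ ?_ <;> intro k hk <;>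
      simp only [mem_Icc, mem_Ioc] at hk ⊢ <;> first | omega | congr 1 <;> omega

section StaircasePaths

variable {u : ℕ → ℕ → ℕ} {t c : ℕ}

lemma lowerPath_le_upperPath
    (hu : MonotoneOn (Function.uncurry u) (Set.Icc 1 t ×ˢ Set.Icc 1 (t + c - 1)))
    (ht : 1 ≤ t) {a b s : ℕ} (ha : 1 ≤ a) (hab : a ≤ b) (hbc : b ≤ c)
    (hs : s ∈ Ioc 0 (t + a - 1)) :
    u (s - a + 1) s ≤ u (min s t) (c - b + s) := by
  rw [mem_Ioc] at hs
  exact hu (a := (s - a + 1, s)) (b := (min s t, c - b + s))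
    (by simp only [Set.mem_prod, Set.mem_Icc]; omega)
    (by simp only [Set.mem_prod, Set.mem_Icc]; omega) (Prod.mk_le_mk.2 ⟨by omega, by omega⟩)

lemma monotoneOn_upperPath
    (hu : MonotoneOn (Function.uncurry u) (Set.Icc 1 t ×ˢ Set.Icc 1 (t + c - 1)))
    (ht : 1 ≤ t) {b : ℕ} (hbc : b ≤ c) :
    MonotoneOn (fun s => u (min s t) (c - b + s)) (Set.Icc 1 (t + b - 1)) := by
  intro s hs s' hs' hss'
  rw [Set.mem_Icc] at hs hs'
  exact hu (a := (min s t, c - b + s)) (b := (min s' t, c - b + s'))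
    (by simp only [Set.mem_prod, Set.mem_Icc]; omega)
    (by simp only [Set.mem_prod, Set.mem_Icc]; omega) (Prod.mk_le_mk.2 ⟨by omega, by omega⟩)

lemma mul_sum_lowerPath_le_mul_sum_upperPath
    (hu : MonotoneOn (Function.uncurry u) (Set.Icc 1 t ×ˢ Set.Icc 1 (t + c - 1)))
    (ht : 1 ≤ t) {a b : ℕ} (ha : 1 ≤ a) (hab : a ≤ b) (hbc : b ≤ c) :
    (t + b - 1) * ∑ s ∈ Ioc 0 (t + a - 1), u (s - a + 1) s ≤
      (t + a - 1) * ∑ s ∈ Ioc 0 (t + b - 1), u (min s t) (c - b + s) :=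
  calc (t + b - 1) * ∑ s ∈ Ioc 0 (t + a - 1), u (s - a + 1) s
      ≤ (t + b - 1) * ∑ s ∈ Ioc 0 (t + a - 1), u (min s t) (c - b + s) := by
        gcongr with s hs
        exact lowerPath_le_upperPath hu ht ha hab hbc hs
    _ ≤ (t + a - 1) * ∑ s ∈ Ioc 0 (t + b - 1), u (min s t) (c - b + s) :=
        mul_sum_Ioc_le_mul_sum_Ioc (monotoneOn_upperPath hu ht hbc)
          (by omega : t + a - 1 ≤ t + b - 1)

end StaircasePaths

lemma div_sub_le_div_of_mul_add_le {K : Type*} [Field K] [LinearOrder K] [IsStrictOrderedRing K]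
    {x y z p q : K} (hxy : x < y) (hq : 0 < q) (h : q * z + p * x ≤ p * y) :
    z / (y - x) ≤ p / q := by
  rw [div_le_div_iff₀ (sub_pos.2 hxy) hq]
  linarith

lemma prod_range_div_eq_choose {K : Type*} [Field K] [CharZero K] (n k : ℕ) :
    ∏ j ∈ range k, ((n + 1 + j : ℕ) : K) / ((j + 1 : ℕ) : K) = (n + k).choose k := by
  rw [prod_div_distrib, ← Nat.cast_prod, ← Nat.cast_prod, ← Nat.ascFactorial_eq_prod_range,
    prod_range_add_one_eq_factorial, Nat.ascFactorial_eq_factorial_mul_choose, Nat.cast_mul,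
    mul_div_cancel_left₀ _ (Nat.cast_ne_zero.2 k.factorial_ne_zero)]

lemma prod_Ico_div_eq_choose {K : Type*} [Field K] [CharZero K] {t i : ℕ} (ht : 1 ≤ t)
    (hi : 1 ≤ i) :
    ∏ j ∈ Ico 1 i, ((t + j - 1 : ℕ) : K) / ((i - j : ℕ) : K) = (t + i - 2).choose (i - 1) := by
  rw [prod_Ico_eq_prod_range, prod_div_distrib,
    ← prod_range_reflect (fun k => ((i - (1 + k) : ℕ) : K)), ← prod_div_distrib]
  convert prod_range_div_eq_choose (K := K) (t - 1) (i - 1) using 3 with k hk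
  · rw [mem_range] at hk; congr 1; omega
  · rw [mem_range] at hk; congr 1; omega
  · omega

lemma prod_Ioc_div_eq_choose {K : Type*} [Field K] [CharZero K] {t i c : ℕ} (ht : 1 ≤ t)
    (hic : i ≤ c) :
    ∏ j ∈ Ioc i c, ((t + j - 1 : ℕ) : K) / ((j - i : ℕ) : K) =
      (t + c - 1).choose (t + i - 1) := by
  rw [← Ico_add_one_add_one_eq_Ioc, prod_Ico_eq_prod_range,
    Nat.choose_symm_of_eq_add (by omega : t + c - 1 = (t + i - 1) + (c - i))]
  convert prod_range_div_eq_choose (K := K) (t + i - 1) (c + 1 - (i + 1)) using 3 with k hk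
  · congr 1; omega
  · congr 1; omega
  · omega
  · omega

section ShiftBounds

variable {t c : ℕ} {m M : ℕ → ℕ}

lemma lt_of_forall_mul_le_mul
    (hmM : ∀ a b, 1 ≤ a → a ≤ b → b ≤ c → (t + b - 1) * m a ≤ (t + a - 1) * M b)
    (hM : ∀ b, 1 ≤ b → b ≤ c → 0 < M b) {a b : ℕ} (ha : 1 ≤ a) (hab : a < b) (hbc : b ≤ c) :
    m a < M b :=
  Nat.lt_of_mul_lt_mul_left <| calc
    (t + b - 1) * m a ≤ (t + a - 1) * M b := hmM a b ha hab.le hbc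
    _ < (t + b - 1) * M b := Nat.mul_lt_mul_of_pos_right (by omega) (hM b (by omega) hbc)

lemma prod_div_sub_le_choose_mul_choose_of_forall_mul_le_mul
    (hmM : ∀ a b, 1 ≤ a → a ≤ b → b ≤ c → (t + b - 1) * m a ≤ (t + a - 1) * M b)
    (hM : ∀ b, 1 ≤ b → b ≤ c → 0 < M b) (ht : 1 ≤ t) {i : ℕ} (hi : 1 ≤ i) (hic : i ≤ c) :
    (∏ j ∈ Ico 1 i, (m j : ℚ) / ((M i : ℚ) - (m j : ℚ))) *
        (∏ j ∈ Ioc i c, (m j : ℚ) / ((M j : ℚ) - (m i : ℚ))) ≤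
      ((t + c - 1).choose (t + i - 1) : ℚ) * ((t + i - 2).choose (i - 1) : ℚ) := by
  have hlt {a b : ℕ} (ha : 1 ≤ a) (hab : a < b) (hbc : b ≤ c) : (m a : ℚ) < M b := by
    exact_mod_cast lt_of_forall_mul_le_mul hmM hM ha hab hbc
  have hbelow : ∀ j ∈ Ico 1 i,
      (m j : ℚ) / ((M i : ℚ) - (m j : ℚ)) ≤ ((t + j - 1 : ℕ) : ℚ) / ((i - j : ℕ) : ℚ) := by
    intro j hj
    rw [mem_Ico] at hj
    have key : (i - j) * m j + (t + j - 1) * m j ≤ (t + j - 1) * M i := by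
      rw [← add_mul, (by omega : i - j + (t + j - 1) = t + i - 1)]
      exact hmM j i hj.1 hj.2.le hic
    exact div_sub_le_div_of_mul_add_le (hlt hj.1 hj.2 hic) (Nat.cast_pos.2 (by omega))
      (by exact_mod_cast key)
  have habove : ∀ j ∈ Ioc i c,
      (m j : ℚ) / ((M j : ℚ) - (m i : ℚ)) ≤ ((t + j - 1 : ℕ) : ℚ) / ((j - i : ℕ) : ℚ) := by
    intro j hj
    rw [mem_Ioc] at hj
    have hmj : m j ≤ M j := Nat.le_of_mul_le_mul_left (hmM j j (by omega) le_rfl hj.2) (by omega)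
    have key : (j - i) * m j + (t + j - 1) * m i ≤ (t + j - 1) * M j :=
      calc (j - i) * m j + (t + j - 1) * m i ≤ (j - i) * M j + (t + i - 1) * M j :=
            add_le_add (Nat.mul_le_mul_left _ hmj) (hmM i j hi hj.1.le hj.2)
        _ = (t + j - 1) * M j := by rw [← add_mul]; congr 1; omega
    exact div_sub_le_div_of_mul_add_le (hlt hi hj.1 hj.2) (Nat.cast_pos.2 (by omega))
      (by exact_mod_cast key)
  have hbelow_nonneg : ∀ j ∈ Ico 1 i, 0 ≤ (m j : ℚ) / ((M i : ℚ) - (m j : ℚ)) := fun j hj =>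
    div_nonneg (Nat.cast_nonneg _)
      (sub_nonneg.2 (hlt (mem_Ico.1 hj).1 (mem_Ico.1 hj).2 hic).le)
  have habove_nonneg : ∀ j ∈ Ioc i c, 0 ≤ (m j : ℚ) / ((M j : ℚ) - (m i : ℚ)) := fun j hj =>
    div_nonneg (Nat.cast_nonneg _)
      (sub_nonneg.2 (hlt hi (mem_Ioc.1 hj).1 (mem_Ioc.1 hj).2).le)
  rw [mul_comm (((t + c - 1).choose _ : ℕ) : ℚ), ← prod_Ico_div_eq_choose ht hi,
    ← prod_Ioc_div_eq_choose ht hic]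
  exact mul_le_mul (prod_le_prod hbelow_nonneg hbelow) (prod_le_prod habove_nonneg habove)
    (prod_nonneg habove_nonneg) (prod_nonneg fun _ _ => by positivity)

end ShiftBounds

theorem lower_bound_betti_standard_determinantal_general (t c : ℕ) (ht : 1 ≤ t)
    (u : ℕ → ℕ → ℕ)
    (hpos : ∀ i j, 1 ≤ i → i ≤ t → 1 ≤ j → j ≤ t + c - 1 → 0 < u i j)
    (hrow : ∀ i j, 1 ≤ i → i + 1 ≤ t → 1 ≤ j → j ≤ t + c - 1 → u i j ≤ u (i + 1) j)
    (hcol : ∀ i j, 1 ≤ i → i ≤ t → 1 ≤ j → j + 1 ≤ t + c - 1 → u i j ≤ u i (j + 1))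
    (m M : ℕ → ℕ)
    (hm : ∀ i, 1 ≤ i → i ≤ c →
      m i = (∑ j ∈ Finset.Icc 1 i, u 1 j) + ∑ k ∈ Finset.Icc 2 t, u k (i + k - 1))
    (hM : ∀ i, 1 ≤ i → i ≤ c →
      M i = (∑ k ∈ Finset.Icc 1 t, u k (c - i + k)) +
        ∑ j ∈ Finset.Icc (t + c - i + 1) (t + c - 1), u t j) :
    ∀ i, 1 ≤ i → i ≤ c →
      (∀ j, 1 ≤ j → j < i → m j < M i) ∧
      (∀ j, i < j → j ≤ c → m i < M j) ∧
      (∏ j ∈ Finset.Ico 1 i, (m j : ℚ) / ((M i : ℚ) - (m j : ℚ))) *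
        (∏ j ∈ Finset.Ioc i c, (m j : ℚ) / ((M j : ℚ) - (m i : ℚ))) ≤
      ((t + c - 1).choose (t + i - 1) : ℚ) * ((t + i - 2).choose (i - 1) : ℚ) := by
  have hmM : ∀ a b, 1 ≤ a → a ≤ b → b ≤ c → (t + b - 1) * m a ≤ (t + a - 1) * M b := by
    intro a b ha hab hbc
    rw [hm a ha (hab.trans hbc), hM b (ha.trans hab) hbc,
      sum_Icc_add_sum_Icc_eq_sum_Ioc_lowerPath u ht ha,
      sum_Icc_add_sum_Icc_eq_sum_Ioc_upperPath u (ha.trans hab) hbc]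
    exact mul_sum_lowerPath_le_mul_sum_upperPath
      (monotoneOn_uncurry_of_le_add_one hrow hcol) ht ha hab hbc
  have hMpos : ∀ b, 1 ≤ b → b ≤ c → 0 < M b := by
    intro b hb hbc
    rw [hM b hb hbc]
    exact (hpos 1 (c - b + 1) le_rfl ht (by omega) (by omega)).trans_le <| le_add_right <|
      single_le_sum (f := fun k => u k (c - b + k)) (fun _ _ => Nat.zero_le _)
        (mem_Icc.2 ⟨le_rfl, ht⟩)
  intro i hi hic
  exact ⟨fun j hj hji => lt_of_forall_mul_le_mul hmM hMpos hj hji hic,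
    fun j hij hjc => lt_of_forall_mul_le_mul hmM hMpos hi hij hjc,
    prod_div_sub_le_choose_mul_choose_of_forall_mul_le_mul hmM hMpos ht hi hic⟩

/-- Theorem 2.4, lower bound, arithmetic form. For every `1 ≤ i ≤ c` the denominators
`M i − m j` (for `1 ≤ j < i`) and `M j − m i` (for `i < j ≤ c`) are positive, and
`∏_{1≤j<i} m j/(M i − m j) · ∏_{i<j≤c} m j/(M j − m i) ≤ C(t+c−1, t+i−1)·C(t+i−2, i−1)`,
the right-hand side being the `i`-th total Betti number of a standard determinantal
ideal with degree matrix `u`. -/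
theorem lower_bound_betti_standard_determinantal (t c : ℕ) (ht : 1 ≤ t) (hc : 1 ≤ c)
    (u : ℕ → ℕ → ℕ)
    (hpos : ∀ i j, 1 ≤ i → i ≤ t → 1 ≤ j → j ≤ t + c - 1 → 0 < u i j)
    (hrow : ∀ i j, 1 ≤ i → i + 1 ≤ t → 1 ≤ j → j ≤ t + c - 1 → u i j ≤ u (i + 1) j)
    (hcol : ∀ i j, 1 ≤ i → i ≤ t → 1 ≤ j → j + 1 ≤ t + c - 1 → u i j ≤ u i (j + 1))
    (m M : ℕ → ℕ)
    (hm : ∀ i, 1 ≤ i → i ≤ c →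
      m i = (∑ j ∈ Finset.Icc 1 i, u 1 j) + ∑ k ∈ Finset.Icc 2 t, u k (i + k - 1))
    (hM : ∀ i, 1 ≤ i → i ≤ c →
      M i = (∑ k ∈ Finset.Icc 1 t, u k (c - i + k)) +
        ∑ j ∈ Finset.Icc (t + c - i + 1) (t + c - 1), u t j) :
    ∀ i, 1 ≤ i → i ≤ c →
      (∀ j, 1 ≤ j → j < i → m j < M i) ∧
      (∀ j, i < j → j ≤ c → m i < M j) ∧
      (∏ j ∈ Finset.Ico 1 i, (m j : ℚ) / ((M i : ℚ) - (m j : ℚ))) *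
        (∏ j ∈ Finset.Ioc i c, (m j : ℚ) / ((M j : ℚ) - (m i : ℚ))) ≤
      ((t + c - 1).choose (t + i - 1) : ℚ) * ((t + i - 2).choose (i - 1) : ℚ) :=
  lower_bound_betti_standard_determinantal_general t c ht u hpos hrow hcol m M hm hM
end

section
/- (Theorem 3.3, upper bounds, arithmetic form.) The following three inequalities hold: t(t+1)/2 ≤ (1/2)·M_2·M_3; t²−1 ≤ M_1·M_3; and t(t−1)/2 ≤ (1/2)·M_1·M_2. The left-hand sides are the total Betti numbers β_1, β_2, β_3 of the ideal of submaximal minors of the symmetric matrix. -/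
/-!
Since every `2 aᵢ` is a positive integer, `aᵢ ≥ 1/2`; hence `ℓ ≥ t`, `M₁ = 2 ∑_{i ≥ 2} aᵢ ≥ t - 1`,
`M₂ = M₁ + a₁ + a_t ≥ t` and `M₃ ≥ ℓ + 1 ≥ t + 1`. The Betti numbers
`t(t+1)/2`, `(t-1)(t+1)` and `t(t-1)/2` are the corresponding products of these lower bounds.
-/

open Finset

theorem card_le_two_mul_sum_of_half_le {ι K : Type*} [Field K] [LinearOrder K]
    [IsStrictOrderedRing K] (s : Finset ι) {a : ι → K} (ha : ∀ i ∈ s, 1 / 2 ≤ a i) :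
    (#s : K) ≤ 2 * ∑ i ∈ s, a i := by
  have h := card_nsmul_le_sum s a (1 / 2) ha
  rw [nsmul_eq_mul] at h
  linarith

theorem sub_one_le_two_mul_sum_Icc_sub_two_mul_first {t : ℕ} (ht : 1 ≤ t) {a : ℕ → ℚ}
    (ha : ∀ i ∈ Icc 1 t, 1 / 2 ≤ a i) :
    (t : ℚ) - 1 ≤ 2 * ∑ i ∈ Icc 1 t, a i - 2 * a 1 := by
  rw [← add_sum_Ioc_eq_sum_Icc ht]
  have h := card_le_two_mul_sum_of_half_le (Ioc 1 t) fun i hi => ha i (Ioc_subset_Icc_self hi)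
  rw [Nat.card_Ioc, Nat.cast_sub ht, Nat.cast_one] at h
  linarith

theorem upper_bound_betti_symmetric_submaximal_minors_general (t : ℕ) (ht : 2 ≤ t) (a : ℕ → ℚ)
    (hint : ∀ i j, 1 ≤ i → i ≤ j → j ≤ t → ∃ n : ℕ, 0 < n ∧ a i + a j = n)
    (ℓ M1 M2 M3 : ℚ)
    (hℓ : ℓ = 2 * ∑ i ∈ Finset.Icc 1 t, a i)
    (hM1 : M1 = ℓ - 2 * a 1)
    (hM2 : M2 = ℓ + a t - a 1)
    (hM3 : M3 = ℓ + a (t - 1) + a t) :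
    (t : ℚ) * ((t : ℚ) + 1) / 2 ≤ (1 / 2) * M2 * M3 ∧
    (t : ℚ) ^ 2 - 1 ≤ M1 * M3 ∧
    (t : ℚ) * ((t : ℚ) - 1) / 2 ≤ (1 / 2) * M1 * M2 := by
  have ha : ∀ i ∈ Icc 1 t, 1 / 2 ≤ a i := fun i hi => by
    obtain ⟨n, hn, hsum⟩ := hint i i (mem_Icc.1 hi).1 le_rfl (mem_Icc.1 hi).2
    have : (1 : ℚ) ≤ n := by exact_mod_cast hn
    linarith
  have ha_first := ha 1 (mem_Icc.2 ⟨le_rfl, by omega⟩)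
  have ha_last := ha t (mem_Icc.2 ⟨by omega, le_rfl⟩)
  have ha_prev := ha (t - 1) (mem_Icc.2 ⟨by omega, by omega⟩)
  have hM1b : (t : ℚ) - 1 ≤ M1 :=
    hM1 ▸ hℓ ▸ sub_one_le_two_mul_sum_Icc_sub_two_mul_first (by omega) ha
  have hM2b : (t : ℚ) ≤ M2 := by linarith
  have hM3b : (t : ℚ) + 1 ≤ M3 := by linarith
  have ht' : (2 : ℚ) ≤ t := by exact_mod_cast ht
  refine ⟨?_, ?_, ?_⟩
  · linarith [mul_le_mul hM2b hM3b (by linarith) (by linarith)]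
  · linarith [mul_le_mul hM1b hM3b (by linarith) (by linarith)]
  · linarith [mul_le_mul hM1b hM2b (by linarith) (by linarith)]

/-- Theorem 3.3, upper bounds, arithmetic form, for the ideal of submaximal minors of a
`t × t` homogeneous symmetric matrix: `t(t+1)/2 ≤ (1/2)·M2·M3`, `t²−1 ≤ M1·M3` and
`t(t−1)/2 ≤ (1/2)·M1·M2`, the left-hand sides being the total Betti numbers
`β 1, β 2, β 3`. -/
theorem upper_bound_betti_symmetric_submaximal_minors (t : ℕ) (ht : 2 ≤ t) (a : ℕ → ℚ)
    (hmono : ∀ i, 1 ≤ i → i + 1 ≤ t → a i ≤ a (i + 1))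
    (hint : ∀ i j, 1 ≤ i → i ≤ j → j ≤ t → ∃ n : ℕ, 0 < n ∧ a i + a j = n)
    (ℓ m1 M1 m2 M2 m3 M3 : ℚ)
    (hℓ : ℓ = 2 * ∑ i ∈ Finset.Icc 1 t, a i)
    (hm1 : m1 = ℓ - 2 * a t) (hM1 : M1 = ℓ - 2 * a 1)
    (hm2 : m2 = ℓ - a t + a 1) (hM2 : M2 = ℓ + a t - a 1)
    (hm3 : m3 = ℓ + a 1 + a 2) (hM3 : M3 = ℓ + a (t - 1) + a t) :
    (t : ℚ) * ((t : ℚ) + 1) / 2 ≤ (1 / 2) * M2 * M3 ∧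
    (t : ℚ) ^ 2 - 1 ≤ M1 * M3 ∧
    (t : ℚ) * ((t : ℚ) - 1) / 2 ≤ (1 / 2) * M1 * M2 :=
  upper_bound_betti_symmetric_submaximal_minors_general t ht a hint ℓ M1 M2 M3 hℓ hM1 hM2 hM3
end

section
/- (Theorem 3.3, equality in the linear case.) If a_1 = a_2 = ⋯ = a_t = 1/2, then m_i = M_i = t+i−2 for i = 1, 2, 3, and all six bounds are attained with equality: (m_2/(M_2−m_1))·(m_3/(M_3−m_1)) = t(t+1)/2 = (1/2)M_2M_3; (m_1/(M_2−m_1))·(m_3/(M_3−m_2)) = t²−1 = M_1M_3; and (m_1/(M_3−m_1))·(m_2/(M_3−m_2)) = t(t−1)/2 = (1/2)M_1M_2. -/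
/-! For `a ≡ 1/2` every entry of the symmetric matrix is linear and `ℓ = t`, so the shifts collapse to
`m_i = M_i = t + i - 2`; the differences `M_2 - m_1`, `M_3 - m_1`, `M_3 - m_2` are then `1, 2, 1`
and each bound reduces to a polynomial identity in `t`. -/

theorem sum_Icc_one_eq_nsmul_of_forall_eq {M : Type*} [AddCommMonoid M] {a : ℕ → M} {t : ℕ} {c : M}
    (ha : ∀ i, 1 ≤ i → i ≤ t → a i = c) : ∑ i ∈ Finset.Icc 1 t, a i = t • c := by
  rw [Finset.sum_eq_card_nsmul fun i hi => ha i (Finset.mem_Icc.mp hi).1 (Finset.mem_Icc.mp hi).2,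
    Nat.card_Icc, Nat.add_sub_cancel]

theorem equality_betti_symmetric_submaximal_minors_linear_general (t : ℕ) (ht : 2 ≤ t) (a : ℕ → ℚ)
    (ha : ∀ i, 1 ≤ i → i ≤ t → a i = 1 / 2)
    (ℓ m1 M1 m2 M2 m3 M3 : ℚ)
    (hℓ : ℓ = 2 * ∑ i ∈ Finset.Icc 1 t, a i)
    (hm1 : m1 = ℓ - 2 * a t) (hM1 : M1 = ℓ - 2 * a 1)
    (hm2 : m2 = ℓ - a t + a 1) (hM2 : M2 = ℓ + a t - a 1)
    (hm3 : m3 = ℓ + a 1 + a 2) (hM3 : M3 = ℓ + a (t - 1) + a t) :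
    m1 = (t : ℚ) - 1 ∧ M1 = (t : ℚ) - 1 ∧
    m2 = (t : ℚ) ∧ M2 = (t : ℚ) ∧
    m3 = (t : ℚ) + 1 ∧ M3 = (t : ℚ) + 1 ∧
    (m2 / (M2 - m1)) * (m3 / (M3 - m1)) = (t : ℚ) * ((t : ℚ) + 1) / 2 ∧
    (t : ℚ) * ((t : ℚ) + 1) / 2 = (1 / 2) * M2 * M3 ∧
    (m1 / (M2 - m1)) * (m3 / (M3 - m2)) = (t : ℚ) ^ 2 - 1 ∧
    (t : ℚ) ^ 2 - 1 = M1 * M3 ∧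
    (m1 / (M3 - m1)) * (m2 / (M3 - m2)) = (t : ℚ) * ((t : ℚ) - 1) / 2 ∧
    (t : ℚ) * ((t : ℚ) - 1) / 2 = (1 / 2) * M1 * M2 := by
  have hℓt : ℓ = t := by
    rw [hℓ, sum_Icc_one_eq_nsmul_of_forall_eq ha, nsmul_eq_mul]
    ring
  have h1 : a 1 = 1 / 2 := ha 1 le_rfl (by omega)
  have h2 : a 2 = 1 / 2 := ha 2 (by omega) ht
  have hpred : a (t - 1) = 1 / 2 := ha (t - 1) (by omega) (by omega)
  have hlast : a t = 1 / 2 := ha t (by omega) le_rfl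
  subst hm1 hM1 hm2 hM2 hm3 hM3
  rw [hℓt, h1, h2, hpred, hlast]
  refine ⟨by ring, by ring, by ring, by ring, by ring, by ring, ?_, by ring, ?_, by ring, ?_, by ring⟩ <;>
    norm_num <;> ring

/-- Theorem 3.3, equality in the linear case. If `a 1 = ⋯ = a t = 1/2` then
`m i = M i = t + i − 2` for `i = 1, 2, 3`, and all six bounds are attained with
equality. -/
theorem equality_betti_symmetric_submaximal_minors_linear (t : ℕ) (ht : 2 ≤ t) (a : ℕ → ℚ)
    (hmono : ∀ i, 1 ≤ i → i + 1 ≤ t → a i ≤ a (i + 1))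
    (hint : ∀ i j, 1 ≤ i → i ≤ j → j ≤ t → ∃ n : ℕ, 0 < n ∧ a i + a j = n)
    (ha : ∀ i, 1 ≤ i → i ≤ t → a i = 1 / 2)
    (ℓ m1 M1 m2 M2 m3 M3 : ℚ)
    (hℓ : ℓ = 2 * ∑ i ∈ Finset.Icc 1 t, a i)
    (hm1 : m1 = ℓ - 2 * a t) (hM1 : M1 = ℓ - 2 * a 1)
    (hm2 : m2 = ℓ - a t + a 1) (hM2 : M2 = ℓ + a t - a 1)
    (hm3 : m3 = ℓ + a 1 + a 2) (hM3 : M3 = ℓ + a (t - 1) + a t) :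
    m1 = (t : ℚ) - 1 ∧ M1 = (t : ℚ) - 1 ∧
    m2 = (t : ℚ) ∧ M2 = (t : ℚ) ∧
    m3 = (t : ℚ) + 1 ∧ M3 = (t : ℚ) + 1 ∧
    (m2 / (M2 - m1)) * (m3 / (M3 - m1)) = (t : ℚ) * ((t : ℚ) + 1) / 2 ∧
    (t : ℚ) * ((t : ℚ) + 1) / 2 = (1 / 2) * M2 * M3 ∧
    (m1 / (M2 - m1)) * (m3 / (M3 - m2)) = (t : ℚ) ^ 2 - 1 ∧
    (t : ℚ) ^ 2 - 1 = M1 * M3 ∧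
    (m1 / (M3 - m1)) * (m2 / (M3 - m2)) = (t : ℚ) * ((t : ℚ) - 1) / 2 ∧
    (t : ℚ) * ((t : ℚ) - 1) / 2 = (1 / 2) * M1 * M2 :=
  equality_betti_symmetric_submaximal_minors_linear_general t ht a ha ℓ m1 M1 m2 M2 m3 M3 hℓ hm1 hM1
    hm2 hM2 hm3 hM3
end

section
/- (Theorem 3.6, lower bounds, arithmetic form.) The following inequalities of rational numbers hold, all denominators being positive: (m_2/(M_2−m_1))·(m_3/(M_3−m_1))·(m_4/(M_4−m_1)) ≤ t²; (m_1/(M_2−m_1))·(m_3/(M_3−m_2))·(m_4/(M_4−m_2)) ≤ 2t²−2; (m_1/(M_3−m_1))·(m_2/(M_3−m_2))·(m_4/(M_4−m_3)) ≤ t²; and (m_1/(M_4−m_1))·(m_2/(M_4−m_2))·(m_3/(M_4−m_3)) ≤ 1. The right-hand sides are the total Betti numbers β_1, β_2, β_3, β_4 of the ideal of submaximal minors. -/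
/-!
Write `K = a_t − b_1`, `d = a_1 − b_t` and `g = max(b_t − b_1, a_t − a_1)`. Then the shifts are
`m₁ = s − K`, `m₂ = s − g`, `M₂ = s + g`, `m₃ = s + d`, `M₃ = s + K`, `m₄ = M₄ = 2s`, and since every
entry degree `a_j − b_i` lies between `d` and `K` we have `K + d ≤ s ≤ tK`, while `0 ≤ g ≤ K − d`.
Each bound then follows by matching the three numerators with the three denominators, up to a
permutation, so that every numerator is at most an explicit multiple of its partner; the multiples
multiply to the Betti number.
-/

open Finset

section DegreeSums

variable {α : Type*} [AddCommGroup α] [LinearOrder α] [IsOrderedAddMonoid α]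
  {a b : ℕ → α} {t : ℕ}

lemma sum_Icc_sub_le_card_nsmul (ha : MonotoneOn a (Set.Icc 1 t))
    (hb : MonotoneOn b (Set.Icc 1 t)) :
    ∑ i ∈ Icc 1 t, (a i - b i) ≤ t • (a t - b 1) := by
  have hle : ∀ i ∈ Icc 1 t, a i - b i ≤ a t - b 1 := by
    intro i hi
    have hi' : i ∈ Set.Icc 1 t := by simpa using hi
    have h1 : (1 : ℕ) ∈ Set.Icc 1 t := ⟨le_rfl, hi'.1.trans hi'.2⟩
    have ht : t ∈ Set.Icc 1 t := ⟨hi'.1.trans hi'.2, le_rfl⟩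
    exact sub_le_sub (ha hi' ht hi'.2) (hb h1 hi' hi'.1)
  simpa using sum_le_card_nsmul _ _ _ hle

lemma add_le_sum_Icc_sub (ha : MonotoneOn a (Set.Icc 1 t)) (hb : MonotoneOn b (Set.Icc 1 t))
    (ht : 2 ≤ t) (hba : b t ≤ a 1) :
    a t - b 1 + (a 1 - b t) ≤ ∑ i ∈ Icc 1 t, (a i - b i) := by
  have h1 : (1 : ℕ) ∈ Set.Icc 1 t := ⟨le_rfl, by omega⟩
  have htt : t ∈ Set.Icc 1 t := ⟨by omega, le_rfl⟩
  have hnonneg : ∀ i ∈ Icc 1 t, 0 ≤ a i - b i := by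
    intro i hi
    have hi' : i ∈ Set.Icc 1 t := by simpa using hi
    exact sub_nonneg.2 ((hb hi' htt hi'.2).trans (hba.trans (ha h1 hi' hi'.1)))
  have hpair : ({1, t} : Finset ℕ) ⊆ Icc 1 t := by
    simpa [insert_subset_iff] using And.intro h1 htt
  calc a t - b 1 + (a 1 - b t) = ∑ i ∈ {1, t}, (a i - b i) := by
        rw [sum_pair (by omega)]; abel
    _ ≤ ∑ i ∈ Icc 1 t, (a i - b i) :=
        sum_le_sum_of_subset_of_nonneg hpair fun i hi _ ↦ hnonneg i hi

end DegreeSums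

section ShiftRatios

variable {F : Type*} [Field F] [LinearOrder F] [IsStrictOrderedRing F] {t s K d g : F}

lemma div_mul_div_mul_div_le {a b c x y z r : F} (hx : 0 < x) (hy : 0 < y) (hz : 0 < z)
    (h : a * b * c ≤ r * (x * y * z)) : a / x * (b / y) * (c / z) ≤ r := by
  rw [div_mul_div_comm, div_mul_div_comm, div_le_iff₀ (by positivity)]
  exact h

lemma shift_ratio_le_betti_one (ht : 0 ≤ t) (hd : 0 < d) (hg : 0 ≤ g) (hgK : g + d ≤ K)
    (hKs : K + d ≤ s) (hsK : s ≤ t * K) :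
    (s - g) / ((s + g) - (s - K)) * ((s + d) / ((s + K) - (s - K))) *
      (2 * s / (2 * s - (s - K))) ≤ t ^ 2 := by
  refine div_mul_div_mul_div_le (by linarith) (by linarith) (by linarith) ?_
  calc (s - g) * (s + d) * (2 * s) ≤ (t * K) * (s + K) * (2 * (t * (K + g))) := by
        gcongr ?_ * ?_ * (2 * ?_) <;> nlinarith
    _ = t ^ 2 * (((s + g) - (s - K)) * ((s + K) - (s - K)) * (2 * s - (s - K))) := by ring

lemma shift_ratio_le_betti_two (ht : 1 ≤ t) (hd : 0 < d) (hg : 0 ≤ g) (hgK : g + d ≤ K)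
    (hKs : K + d ≤ s) (hsK : s ≤ t * K) :
    (s - K) / ((s + g) - (s - K)) * ((s + d) / ((s + K) - (s - g))) *
      (2 * s / (2 * s - (s - g))) ≤ 2 * t ^ 2 - 2 := by
  have htK : 0 ≤ (t - 1) * (K + g) := mul_nonneg (by linarith) (by linarith)
  refine div_mul_div_mul_div_le (by linarith) (by linarith) (by linarith) ?_
  calc (s - K) * (s + d) * (2 * s)
        ≤ ((t - 1) * (K + g)) * ((t + 1) * (K + g)) * (2 * (s + g)) := by
        gcongr ?_ * ?_ * (2 * ?_) <;> nlinarith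
    _ = (2 * t ^ 2 - 2) *
          (((s + g) - (s - K)) * ((s + K) - (s - g)) * (2 * s - (s - g))) := by ring

lemma shift_ratio_le_betti_three (ht : 0 ≤ t) (hd : 0 < d) (hg : 0 ≤ g) (hgK : g + d ≤ K)
    (hKs : K + d ≤ s) (hsK : s ≤ t * K) :
    (s - K) / ((s + K) - (s - K)) * ((s - g) / ((s + K) - (s - g))) *
      (2 * s / (2 * s - (s + d))) ≤ t ^ 2 := by
  refine div_mul_div_mul_div_le (by linarith) (by linarith) (by linarith) ?_
  calc (s - K) * (s - g) * (2 * s) ≤ (s - d) * (t * K) * (2 * (t * (K + g))) := by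
        gcongr ?_ * ?_ * (2 * ?_) <;> nlinarith
    _ = t ^ 2 * (((s + K) - (s - K)) * ((s + K) - (s - g)) * (2 * s - (s + d))) := by ring

lemma shift_ratio_le_betti_four (hd : 0 < d) (hg : 0 ≤ g) (hgK : g + d ≤ K)
    (hKs : K + d ≤ s) :
    (s - K) / (2 * s - (s - K)) * ((s - g) / (2 * s - (s - g))) *
      ((s + d) / (2 * s - (s + d))) ≤ 1 := by
  refine div_mul_div_mul_div_le (by linarith) (by linarith) (by linarith) ?_
  calc (s - K) * (s - g) * (s + d) ≤ (s - d) * (s + g) * (s + K) := by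
        gcongr ?_ * ?_ * ?_ <;> nlinarith
    _ = 1 * ((2 * s - (s - K)) * (2 * s - (s - g)) * (2 * s - (s + d))) := by ring

end ShiftRatios

theorem lower_bound_betti_gulliksen_negard_general (t : ℕ) (ht : 2 ≤ t) (a b : ℕ → ℤ)
    (hamono : ∀ i, 1 ≤ i → i + 1 ≤ t → a i ≤ a (i + 1))
    (hbmono : ∀ i, 1 ≤ i → i + 1 ≤ t → b i ≤ b (i + 1))
    (hab : 1 ≤ a 1 - b t)
    (s m1 m2 M2 m3 M3 m4 M4 : ℤ)
    (hs : s = (∑ i ∈ Finset.Icc 1 t, a i) - ∑ i ∈ Finset.Icc 1 t, b i)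
    (hm1 : m1 = s + b 1 - a t)
    (hm2 : m2 = min (s + b 1 - b t) (s + a 1 - a t))
    (hM2 : M2 = max (s + b t - b 1) (s + a t - a 1))
    (hm3 : m3 = s - b t + a 1) (hM3 : M3 = s + a t - b 1)
    (hm4 : m4 = 2 * s) (hM4 : M4 = 2 * s) :
    0 < (M2 : ℚ) - m1 ∧ 0 < (M3 : ℚ) - m1 ∧ 0 < (M3 : ℚ) - m2 ∧
    0 < (M4 : ℚ) - m1 ∧ 0 < (M4 : ℚ) - m2 ∧ 0 < (M4 : ℚ) - m3 ∧
    ((m2 : ℚ) / ((M2 : ℚ) - m1)) * ((m3 : ℚ) / ((M3 : ℚ) - m1)) *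
      ((m4 : ℚ) / ((M4 : ℚ) - m1)) ≤ (t : ℚ) ^ 2 ∧
    ((m1 : ℚ) / ((M2 : ℚ) - m1)) * ((m3 : ℚ) / ((M3 : ℚ) - m2)) *
      ((m4 : ℚ) / ((M4 : ℚ) - m2)) ≤ 2 * (t : ℚ) ^ 2 - 2 ∧
    ((m1 : ℚ) / ((M3 : ℚ) - m1)) * ((m2 : ℚ) / ((M3 : ℚ) - m2)) *
      ((m4 : ℚ) / ((M4 : ℚ) - m3)) ≤ (t : ℚ) ^ 2 ∧
    ((m1 : ℚ) / ((M4 : ℚ) - m1)) * ((m2 : ℚ) / ((M4 : ℚ) - m2)) *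
      ((m3 : ℚ) / ((M4 : ℚ) - m3)) ≤ 1 := by
  have ha : MonotoneOn a (Set.Icc 1 t) :=
    monotoneOn_of_le_add_one Set.ordConnected_Icc fun i _ hi hi' ↦ hamono i hi.1 hi'.2
  have hb : MonotoneOn b (Set.Icc 1 t) :=
    monotoneOn_of_le_add_one Set.ordConnected_Icc fun i _ hi hi' ↦ hbmono i hi.1 hi'.2
  have ha1t := ha ⟨le_rfl, by omega⟩ ⟨by omega, le_rfl⟩ (by omega : 1 ≤ t)
  have hb1t := hb ⟨le_rfl, by omega⟩ ⟨by omega, le_rfl⟩ (by omega : 1 ≤ t)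
  rw [← sum_sub_distrib] at hs
  have hs_le : s ≤ t * (a t - b 1) := by
    simpa [hs, nsmul_eq_mul] using sum_Icc_sub_le_card_nsmul ha hb
  have hs_ge : a t - b 1 + (a 1 - b t) ≤ s := hs ▸ add_le_sum_Icc_sub ha hb ht (by omega)
  obtain ⟨K, d, g, hd, hg, hgK, hKs, hsK, rfl, rfl, rfl, rfl, rfl⟩ :
      ∃ K d g : ℤ, 0 < d ∧ 0 ≤ g ∧ g + d ≤ K ∧ K + d ≤ s ∧ s ≤ t * K ∧
        m1 = s - K ∧ m2 = s - g ∧ M2 = s + g ∧ m3 = s + d ∧ M3 = s + K :=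
    ⟨a t - b 1, a 1 - b t, max (b t - b 1) (a t - a 1), by omega, by omega, by omega, hs_ge,
      hs_le, by omega, by omega, by omega, by omega, by omega⟩
  subst hm4 hM4
  have qt : (2 : ℚ) ≤ t := by exact_mod_cast ht
  have qd : (0 : ℚ) < d := by exact_mod_cast hd
  have qg : (0 : ℚ) ≤ g := by exact_mod_cast hg
  have qgK : (g + d : ℚ) ≤ K := by exact_mod_cast hgK
  have qKs : (K + d : ℚ) ≤ s := by exact_mod_cast hKs
  have qsK : (s : ℚ) ≤ t * K := by exact_mod_cast hsK
  push_cast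
  refine ⟨by linarith, by linarith, by linarith, by linarith, by linarith, by linarith,
    shift_ratio_le_betti_one (by linarith) qd qg qgK qKs qsK,
    shift_ratio_le_betti_two (by linarith) qd qg qgK qKs qsK,
    shift_ratio_le_betti_three (by linarith) qd qg qgK qKs qsK,
    shift_ratio_le_betti_four qd qg qgK qKs⟩

/-- Theorem 3.6, lower bounds, arithmetic form, for the codimension-4 Gorenstein ideal
of submaximal minors of a `t × t` homogeneous matrix: all denominators are positive and
the four products of ratios of shifts are bounded above by the total Betti numbers
`t², 2t²−2, t², 1` respectively. -/
theorem lower_bound_betti_gulliksen_negard (t : ℕ) (ht : 2 ≤ t) (a b : ℕ → ℤ)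
    (hamono : ∀ i, 1 ≤ i → i + 1 ≤ t → a i ≤ a (i + 1))
    (hbmono : ∀ i, 1 ≤ i → i + 1 ≤ t → b i ≤ b (i + 1))
    (hab : 1 ≤ a 1 - b t)
    (s m1 M1 m2 M2 m3 M3 m4 M4 : ℤ)
    (hs : s = (∑ i ∈ Finset.Icc 1 t, a i) - ∑ i ∈ Finset.Icc 1 t, b i)
    (hm1 : m1 = s + b 1 - a t) (hM1 : M1 = s + b t - a 1)
    (hm2 : m2 = min (s + b 1 - b t) (s + a 1 - a t))
    (hM2 : M2 = max (s + b t - b 1) (s + a t - a 1))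
    (hm3 : m3 = s - b t + a 1) (hM3 : M3 = s + a t - b 1)
    (hm4 : m4 = 2 * s) (hM4 : M4 = 2 * s) :
    0 < (M2 : ℚ) - m1 ∧ 0 < (M3 : ℚ) - m1 ∧ 0 < (M3 : ℚ) - m2 ∧
    0 < (M4 : ℚ) - m1 ∧ 0 < (M4 : ℚ) - m2 ∧ 0 < (M4 : ℚ) - m3 ∧
    ((m2 : ℚ) / ((M2 : ℚ) - m1)) * ((m3 : ℚ) / ((M3 : ℚ) - m1)) *
      ((m4 : ℚ) / ((M4 : ℚ) - m1)) ≤ (t : ℚ) ^ 2 ∧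
    ((m1 : ℚ) / ((M2 : ℚ) - m1)) * ((m3 : ℚ) / ((M3 : ℚ) - m2)) *
      ((m4 : ℚ) / ((M4 : ℚ) - m2)) ≤ 2 * (t : ℚ) ^ 2 - 2 ∧
    ((m1 : ℚ) / ((M3 : ℚ) - m1)) * ((m2 : ℚ) / ((M3 : ℚ) - m2)) *
      ((m4 : ℚ) / ((M4 : ℚ) - m3)) ≤ (t : ℚ) ^ 2 ∧
    ((m1 : ℚ) / ((M4 : ℚ) - m1)) * ((m2 : ℚ) / ((M4 : ℚ) - m2)) *
      ((m3 : ℚ) / ((M4 : ℚ) - m3)) ≤ 1 :=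
  lower_bound_betti_gulliksen_negard_general t ht a b hamono hbmono hab s m1 m2 M2 m3 M3 m4 M4 hs
    hm1 hm2 hM2 hm3 hM3 hm4 hM4
end

section
/- (Theorem 3.6, upper bounds, arithmetic form.) The following inequalities hold: t² ≤ (1/6)·M_2·M_3·M_4; 2t²−2 ≤ (1/2)·M_1·M_3·M_4; t² ≤ (1/2)·M_1·M_2·M_4; and 1 ≤ (1/6)·M_1·M_2·M_3. The left-hand sides are the total Betti numbers β_1, β_2, β_3, β_4 of the ideal of submaximal minors, and the coefficients are 1/((i−1)!(4−i)!) for i = 1, 2, 3, 4. -/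
/-!
Every diagonal difference `a i - b i` is at least the gap `g = a 1 - b t ≥ 1`, so `s ≥ t g`.
Hence `M1 = s - g ≥ (t - 1) g ≥ t - 1`, `M2 ≥ s ≥ t`, `M3 ≥ s + g ≥ t + 1` and `M4 = 2 s ≥ 2 t`;
since the right-hand sides grow with the `Mi`, the four inequalities reduce to polynomial
inequalities in `t`, which hold for `t ≥ 2`.
-/

lemma Nat.monotoneOn_Icc_of_le_add_one {β : Type*} [Preorder β] {f : ℕ → β} {m n : ℕ}
    (hf : ∀ i, m ≤ i → i + 1 ≤ n → f i ≤ f (i + 1)) : MonotoneOn f (Set.Icc m n) :=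
  monotoneOn_of_le_succ Set.ordConnected_Icc fun i _ hi hi' => by
    rw [Order.succ_eq_add_one] at hi' ⊢
    exact hf i hi.1 hi'.2

lemma card_nsmul_le_sum_sub_sum {β : Type*} [AddCommGroup β] [PartialOrder β]
    [IsOrderedAddMonoid β] {a b : ℕ → β} {t : ℕ} (ha : MonotoneOn a (Set.Icc 1 t))
    (hb : MonotoneOn b (Set.Icc 1 t)) :
    t • (a 1 - b t) ≤ ∑ i ∈ Finset.Icc 1 t, a i - ∑ i ∈ Finset.Icc 1 t, b i := by
  have hgap : ∀ i ∈ Finset.Icc 1 t, a 1 - b t ≤ a i - b i := fun i hi => by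
    have hi : i ∈ Set.Icc 1 t := Finset.mem_Icc.mp hi
    exact sub_le_sub (ha ⟨le_rfl, hi.1.trans hi.2⟩ hi hi.1) (hb hi ⟨hi.1.trans hi.2, le_rfl⟩ hi.2)
  have := Finset.card_nsmul_le_sum _ _ _ hgap
  rwa [Nat.card_Icc, add_tsub_cancel_right, Finset.sum_sub_distrib] at this

lemma betti_bounds_of_shift_bounds {K : Type*} [Field K] [LinearOrder K] [IsStrictOrderedRing K]
    {t x₁ x₂ x₃ x₄ : K} (ht : 2 ≤ t)
    (h₁ : t - 1 ≤ x₁) (h₂ : t ≤ x₂) (h₃ : t + 1 ≤ x₃) (h₄ : 2 * t ≤ x₄) :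
    t ^ 2 ≤ 1 / 6 * x₂ * x₃ * x₄ ∧
    2 * t ^ 2 - 2 ≤ 1 / 2 * x₁ * x₃ * x₄ ∧
    t ^ 2 ≤ 1 / 2 * x₁ * x₂ * x₄ ∧
    1 ≤ 1 / 6 * x₁ * x₂ * x₃ := by
  have ht₂ : 0 ≤ t - 2 := by linarith
  have ht₁ : 0 ≤ t - 1 := by linarith
  have ht₀ : 0 ≤ t := by linarith
  have hx₁ : 0 ≤ x₁ := ht₁.trans h₁
  have hx₂ : 0 ≤ x₂ := ht₀.trans h₂
  have hx₃ : 0 ≤ x₃ := by linarith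
  refine ⟨?_, ?_, ?_, ?_⟩
  · calc t ^ 2 ≤ 1 / 6 * t * (t + 1) * (2 * t) := by nlinarith
      _ ≤ _ := by gcongr
  · calc 2 * t ^ 2 - 2 ≤ 1 / 2 * (t - 1) * (t + 1) * (2 * t) := by
          nlinarith [mul_nonneg ht₂ (mul_nonneg ht₁ (by linarith : (0 : K) ≤ t + 1))]
      _ ≤ _ := by gcongr
  · calc t ^ 2 ≤ 1 / 2 * (t - 1) * t * (2 * t) := by nlinarith
      _ ≤ _ := by gcongr
  · calc 1 ≤ 1 / 6 * (t - 1) * t * (t + 1) := by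
          nlinarith [mul_nonneg ht₂ (by positivity : (0 : K) ≤ t ^ 2 + 2 * t + 3)]
      _ ≤ _ := by gcongr

theorem upper_bound_betti_gulliksen_negard_general (t : ℕ) (ht : 2 ≤ t) (a b : ℕ → ℤ)
    (hamono : ∀ i, 1 ≤ i → i + 1 ≤ t → a i ≤ a (i + 1))
    (hbmono : ∀ i, 1 ≤ i → i + 1 ≤ t → b i ≤ b (i + 1))
    (hab : 1 ≤ a 1 - b t)
    (s M1 M2 M3 M4 : ℤ)
    (hs : s = (∑ i ∈ Finset.Icc 1 t, a i) - ∑ i ∈ Finset.Icc 1 t, b i)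
    (hM1 : M1 = s + b t - a 1)
    (hM2 : M2 = max (s + b t - b 1) (s + a t - a 1))
    (hM3 : M3 = s + a t - b 1)
    (hM4 : M4 = 2 * s) :
    (t : ℚ) ^ 2 ≤ (1 / 6) * (M2 : ℚ) * (M3 : ℚ) * (M4 : ℚ) ∧
    2 * (t : ℚ) ^ 2 - 2 ≤ (1 / 2) * (M1 : ℚ) * (M3 : ℚ) * (M4 : ℚ) ∧
    (t : ℚ) ^ 2 ≤ (1 / 2) * (M1 : ℚ) * (M2 : ℚ) * (M4 : ℚ) ∧
    (1 : ℚ) ≤ (1 / 6) * (M1 : ℚ) * (M2 : ℚ) * (M3 : ℚ) := by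
  have ha := Nat.monotoneOn_Icc_of_le_add_one hamono
  have hb := Nat.monotoneOn_Icc_of_le_add_one hbmono
  have hst : t * (a 1 - b t) ≤ s := by
    simpa [hs] using card_nsmul_le_sum_sub_sum ha hb
  have hb1t : b 1 ≤ b t := hb ⟨le_rfl, by omega⟩ ⟨by omega, le_rfl⟩ (by omega)
  have ha1t : a 1 ≤ a t := ha ⟨le_rfl, by omega⟩ ⟨by omega, le_rfl⟩ (by omega)
  have hts : (t : ℤ) ≤ s := (le_mul_of_one_le_right (by positivity) hab).trans hst
  have hM1' : (t : ℤ) - 1 ≤ M1 := by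
    linarith [mul_le_mul_of_nonneg_left hab (by omega : (0 : ℤ) ≤ t - 1)]
  have hM2' : (t : ℤ) ≤ M2 := by
    linarith [le_max_left (s + b t - b 1) (s + a t - a 1)]
  have hM3' : (t : ℤ) + 1 ≤ M3 := by linarith
  have hM4' : 2 * (t : ℤ) ≤ M4 := by linarith
  exact betti_bounds_of_shift_bounds (by exact_mod_cast ht) (by exact_mod_cast hM1')
    (by exact_mod_cast hM2') (by exact_mod_cast hM3') (by exact_mod_cast hM4')

/-- Theorem 3.6, upper bounds, arithmetic form, for the codimension-4 Gorenstein ideal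
of submaximal minors of a `t × t` homogeneous matrix:
`t² ≤ (1/6)·M2·M3·M4`, `2t²−2 ≤ (1/2)·M1·M3·M4`, `t² ≤ (1/2)·M1·M2·M4` and
`1 ≤ (1/6)·M1·M2·M3`, the left-hand sides being the total Betti numbers
`β 1, β 2, β 3, β 4` and the coefficients being `1/((i−1)!(4−i)!)`. -/
theorem upper_bound_betti_gulliksen_negard (t : ℕ) (ht : 2 ≤ t) (a b : ℕ → ℤ)
    (hamono : ∀ i, 1 ≤ i → i + 1 ≤ t → a i ≤ a (i + 1))
    (hbmono : ∀ i, 1 ≤ i → i + 1 ≤ t → b i ≤ b (i + 1))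
    (hab : 1 ≤ a 1 - b t)
    (s m1 M1 m2 M2 m3 M3 m4 M4 : ℤ)
    (hs : s = (∑ i ∈ Finset.Icc 1 t, a i) - ∑ i ∈ Finset.Icc 1 t, b i)
    (hm1 : m1 = s + b 1 - a t) (hM1 : M1 = s + b t - a 1)
    (hm2 : m2 = min (s + b 1 - b t) (s + a 1 - a t))
    (hM2 : M2 = max (s + b t - b 1) (s + a t - a 1))
    (hm3 : m3 = s - b t + a 1) (hM3 : M3 = s + a t - b 1)
    (hm4 : m4 = 2 * s) (hM4 : M4 = 2 * s) :
    (t : ℚ) ^ 2 ≤ (1 / 6) * (M2 : ℚ) * (M3 : ℚ) * (M4 : ℚ) ∧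
    2 * (t : ℚ) ^ 2 - 2 ≤ (1 / 2) * (M1 : ℚ) * (M3 : ℚ) * (M4 : ℚ) ∧
    (t : ℚ) ^ 2 ≤ (1 / 2) * (M1 : ℚ) * (M2 : ℚ) * (M4 : ℚ) ∧
    (1 : ℚ) ≤ (1 / 6) * (M1 : ℚ) * (M2 : ℚ) * (M3 : ℚ) :=
  upper_bound_betti_gulliksen_negard_general t ht a b hamono hbmono hab s M1 M2 M3 M4 hs hM1 hM2 hM3
    hM4
end

section
/- (Theorem 3.6, equality in the linear case.) If b_i = 0 for all i and a_j = 1 for all j (so every entry of the matrix is linear), then m_1 = M_1 = t−1, m_2 = M_2 = t, m_3 = M_3 = t+1, m_4 = M_4 = 2t, and the lower bounds are attained with equality: (m_2/(M_2−m_1))·(m_3/(M_3−m_1))·(m_4/(M_4−m_1)) = t²; (m_1/(M_2−m_1))·(m_3/(M_3−m_2))·(m_4/(M_4−m_2)) = 2t²−2; (m_1/(M_3−m_1))·(m_2/(M_3−m_2))·(m_4/(M_4−m_3)) = t²; and (m_1/(M_4−m_1))·(m_2/(M_4−m_2))·(m_3/(M_4−m_3)) = 1. -/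
/-!
With `b = 0` and `a = 1` the sum `s` equals `t`, and every pair of extremal shifts collapses:
`m₁ = M₁ = t - 1`, `m₂ = M₂ = t`, `m₃ = M₃ = t + 1`, `m₄ = M₄ = 2t`. The gaps `M_j - m_i` are then
`1, 2, t + 1, 1, t, t - 1`, and each of the four products telescopes to the corresponding
Gulliksen–Negård Betti number `t², 2t² - 2, t², 1`.
-/

theorem sum_Icc_one_eq_mul_of_forall_eq {f : ℕ → ℤ} {t : ℕ} {c : ℤ}
    (hf : ∀ i, 1 ≤ i → i ≤ t → f i = c) : ∑ i ∈ Finset.Icc 1 t, f i = t * c := by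
  rw [Finset.sum_eq_card_nsmul fun i hi => hf i (Finset.mem_Icc.1 hi).1 (Finset.mem_Icc.1 hi).2]
  simp

theorem linear_shift_products_eq_betti {t : ℚ} (h0 : t ≠ 0) (hm : t - 1 ≠ 0) (hp : t + 1 ≠ 0) :
    t / (t - (t - 1)) * ((t + 1) / (t + 1 - (t - 1))) * (2 * t / (2 * t - (t - 1))) = t ^ 2 ∧
    (t - 1) / (t - (t - 1)) * ((t + 1) / (t + 1 - t)) * (2 * t / (2 * t - t)) = 2 * t ^ 2 - 2 ∧
    (t - 1) / (t + 1 - (t - 1)) * (t / (t + 1 - t)) * (2 * t / (2 * t - (t + 1))) = t ^ 2 ∧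
    (t - 1) / (2 * t - (t - 1)) * (t / (2 * t - t)) * ((t + 1) / (2 * t - (t + 1))) = 1 := by
  simp only [show t - (t - 1) = 1 by ring, show t + 1 - (t - 1) = 2 by ring,
    show t + 1 - t = 1 by ring, show 2 * t - t = t by ring, show 2 * t - (t - 1) = t + 1 by ring,
    show 2 * t - (t + 1) = t - 1 by ring]
  exact ⟨by field_simp, by field_simp; ring, by field_simp, by field_simp⟩

theorem equality_betti_gulliksen_negard_linear_general (t : ℕ) (ht : 2 ≤ t) (a b : ℕ → ℤ)
    (hb0 : ∀ i, 1 ≤ i → i ≤ t → b i = 0)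
    (ha1 : ∀ j, 1 ≤ j → j ≤ t → a j = 1)
    (s m1 M1 m2 M2 m3 M3 m4 M4 : ℤ)
    (hs : s = (∑ i ∈ Finset.Icc 1 t, a i) - ∑ i ∈ Finset.Icc 1 t, b i)
    (hm1 : m1 = s + b 1 - a t) (hM1 : M1 = s + b t - a 1)
    (hm2 : m2 = min (s + b 1 - b t) (s + a 1 - a t))
    (hM2 : M2 = max (s + b t - b 1) (s + a t - a 1))
    (hm3 : m3 = s - b t + a 1) (hM3 : M3 = s + a t - b 1)
    (hm4 : m4 = 2 * s) (hM4 : M4 = 2 * s) :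
    m1 = (t : ℤ) - 1 ∧ M1 = (t : ℤ) - 1 ∧
    m2 = (t : ℤ) ∧ M2 = (t : ℤ) ∧
    m3 = (t : ℤ) + 1 ∧ M3 = (t : ℤ) + 1 ∧
    m4 = 2 * (t : ℤ) ∧ M4 = 2 * (t : ℤ) ∧
    ((m2 : ℚ) / ((M2 : ℚ) - m1)) * ((m3 : ℚ) / ((M3 : ℚ) - m1)) *
      ((m4 : ℚ) / ((M4 : ℚ) - m1)) = (t : ℚ) ^ 2 ∧
    ((m1 : ℚ) / ((M2 : ℚ) - m1)) * ((m3 : ℚ) / ((M3 : ℚ) - m2)) *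
      ((m4 : ℚ) / ((M4 : ℚ) - m2)) = 2 * (t : ℚ) ^ 2 - 2 ∧
    ((m1 : ℚ) / ((M3 : ℚ) - m1)) * ((m2 : ℚ) / ((M3 : ℚ) - m2)) *
      ((m4 : ℚ) / ((M4 : ℚ) - m3)) = (t : ℚ) ^ 2 ∧
    ((m1 : ℚ) / ((M4 : ℚ) - m1)) * ((m2 : ℚ) / ((M4 : ℚ) - m2)) *
      ((m3 : ℚ) / ((M4 : ℚ) - m3)) = 1 := by
  have h1t : 1 ≤ t := by omega
  have hst : s = t := by
    rw [hs, sum_Icc_one_eq_mul_of_forall_eq ha1, sum_Icc_one_eq_mul_of_forall_eq hb0]; ring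
  subst hst
  simp only [hb0 1 le_rfl h1t, hb0 t h1t le_rfl, ha1 1 le_rfl h1t, ha1 t h1t le_rfl, add_zero,
    sub_zero, add_sub_cancel_right, min_self, max_self] at hm1 hM1 hm2 hM2 hm3 hM3
  subst hm1 hM1 hm2 hM2 hm3 hM3 hm4 hM4
  have htq : (2 : ℚ) ≤ t := by exact_mod_cast ht
  refine ⟨rfl, rfl, rfl, rfl, rfl, rfl, rfl, rfl, ?_⟩
  push_cast
  exact linear_shift_products_eq_betti (by linarith) (by linarith) (by linarith)

/-- Theorem 3.6, equality in the linear case. If `b i = 0` and `a j = 1` for all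
admissible indices (so every entry of the matrix is linear), then
`m1 = M1 = t−1`, `m2 = M2 = t`, `m3 = M3 = t+1`, `m4 = M4 = 2t`, and the lower
bounds are attained with equality. -/
theorem equality_betti_gulliksen_negard_linear (t : ℕ) (ht : 2 ≤ t) (a b : ℕ → ℤ)
    (hamono : ∀ i, 1 ≤ i → i + 1 ≤ t → a i ≤ a (i + 1))
    (hbmono : ∀ i, 1 ≤ i → i + 1 ≤ t → b i ≤ b (i + 1))
    (hab : 1 ≤ a 1 - b t)
    (hb0 : ∀ i, 1 ≤ i → i ≤ t → b i = 0)
    (ha1 : ∀ j, 1 ≤ j → j ≤ t → a j = 1)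
    (s m1 M1 m2 M2 m3 M3 m4 M4 : ℤ)
    (hs : s = (∑ i ∈ Finset.Icc 1 t, a i) - ∑ i ∈ Finset.Icc 1 t, b i)
    (hm1 : m1 = s + b 1 - a t) (hM1 : M1 = s + b t - a 1)
    (hm2 : m2 = min (s + b 1 - b t) (s + a 1 - a t))
    (hM2 : M2 = max (s + b t - b 1) (s + a t - a 1))
    (hm3 : m3 = s - b t + a 1) (hM3 : M3 = s + a t - b 1)
    (hm4 : m4 = 2 * s) (hM4 : M4 = 2 * s) :
    m1 = (t : ℤ) - 1 ∧ M1 = (t : ℤ) - 1 ∧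
    m2 = (t : ℤ) ∧ M2 = (t : ℤ) ∧
    m3 = (t : ℤ) + 1 ∧ M3 = (t : ℤ) + 1 ∧
    m4 = 2 * (t : ℤ) ∧ M4 = 2 * (t : ℤ) ∧
    ((m2 : ℚ) / ((M2 : ℚ) - m1)) * ((m3 : ℚ) / ((M3 : ℚ) - m1)) *
      ((m4 : ℚ) / ((M4 : ℚ) - m1)) = (t : ℚ) ^ 2 ∧
    ((m1 : ℚ) / ((M2 : ℚ) - m1)) * ((m3 : ℚ) / ((M3 : ℚ) - m2)) *
      ((m4 : ℚ) / ((M4 : ℚ) - m2)) = 2 * (t : ℚ) ^ 2 - 2 ∧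
    ((m1 : ℚ) / ((M3 : ℚ) - m1)) * ((m2 : ℚ) / ((M3 : ℚ) - m2)) *
      ((m4 : ℚ) / ((M4 : ℚ) - m3)) = (t : ℚ) ^ 2 ∧
    ((m1 : ℚ) / ((M4 : ℚ) - m1)) * ((m2 : ℚ) / ((M4 : ℚ) - m2)) *
      ((m3 : ℚ) / ((M4 : ℚ) - m3)) = 1 :=
  equality_betti_gulliksen_negard_linear_general t ht a b hb0 ha1 s m1 M1 m2 M2 m3 M3 m4 M4 hs hm1
    hM1 hm2 hM2 hm3 hM3 hm4 hM4
end

section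
/- (Theorem 3.8, upper bound, arithmetic form.) For every 1 ≤ i ≤ c one has B_i ≤ (1/((i−1)!·(c−i)!)) · ∏_{1≤j≤c, j≠i} M_j, where B_i is the i-th total Betti number of a reduced arithmetically Cohen–Macaulay divisor of degree d = tc+1−p on a variety of minimal degree of codimension c. -/
/-!
Every shift in `S j` is at least `j + 1` (because `t ≥ 2`), so `∏_{j ≠ i} M j` dominates
`∏_{j ≠ i} (j + 1) = (c + 1)! / (i + 1)`. On the other side, Pascal's rule and the absorption
identity `c * C(c-1, i-1) = i * C(c, i)` give `β'_i + γ_i ≤ i * C(c, i)`, hence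
`B_i ≤ i * C(c, i) + i * C(c, i+1) = i * C(c+1, i+1)`, and
`(i-1)! * (c-i)! * i * C(c+1, i+1) = (c+1)! / (i+1)` as well.
-/

open Finset
open scoped Nat

theorem Finset.prod_Icc_one_add_one_eq_factorial (n : ℕ) :
    ∏ j ∈ Icc 1 n, (j + 1) = (n + 1)! := by
  induction n with
  | zero => simp
  | succ n ih =>
    rw [prod_Icc_succ_top (by omega), ih, Nat.factorial_succ (n + 1), Nat.mul_comm]

theorem Nat.factorial_mul_factorial_mul_choose_eq_prod_erase {c i : ℕ} (hi : 1 ≤ i)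
    (hic : i ≤ c) :
    (i - 1)! * (c - i)! * (i * (c + 1).choose (i + 1)) = ∏ j ∈ (Icc 1 c).erase i, (j + 1) := by
  obtain ⟨k, rfl⟩ : ∃ k, i = k + 1 := ⟨i - 1, by omega⟩
  obtain ⟨l, rfl⟩ : ∃ l, c = l + (k + 1) := ⟨c - (k + 1), by omega⟩
  apply Nat.eq_of_mul_eq_mul_left (show 0 < k + 1 + 1 by omega)
  rw [mul_prod_erase _ (fun j => j + 1) (mem_Icc.mpr ⟨hi, hic⟩),
    prod_Icc_one_add_one_eq_factorial, show l + (k + 1) + 1 = l + (k + 1 + 1) by ring,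
    ← add_choose_mul_factorial_mul_factorial l (k + 1 + 1), Nat.add_sub_cancel,
    Nat.add_sub_cancel, Nat.factorial_succ (k + 1), Nat.factorial_succ k]
  ring

theorem Nat.mul_choose_pred_pred {n k : ℕ} (hk : 1 ≤ k) :
    n * (n - 1).choose (k - 1) = k * n.choose k := by
  rcases n.eq_zero_or_pos with rfl | hn
  · simp [Nat.choose_eq_zero_of_lt hk]
  have h := Nat.add_one_mul_choose_eq (n - 1) (k - 1)
  rwa [Nat.sub_add_cancel hn, Nat.sub_add_cancel hk, Nat.mul_comm _ k] at h

theorem sub_mul_choose_le_mul_choose {p c i : ℕ} (hpc : p ≤ c) (hi : 2 ≤ i) :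
    (p : ℤ) * c.choose (i - 1) - c * (c - 1).choose (i - 2) ≤ c * (c - 1).choose (i - 1) := by
  rcases c.eq_zero_or_pos with rfl | hc
  · simp [Nat.le_zero.mp hpc]
  have hpascal : c.choose (i - 1) = (c - 1).choose (i - 2) + (c - 1).choose (i - 1) := by
    rw [Nat.choose_eq_choose_pred_add hc (by omega), show i - 1 - 1 = i - 2 by omega]
  calc (p : ℤ) * c.choose (i - 1) - c * (c - 1).choose (i - 2)
      ≤ c * c.choose (i - 1) - c * (c - 1).choose (i - 2) := by gcongr
    _ = c * (c - 1).choose (i - 1) := by rw [hpascal]; push_cast; ring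

theorem succ_le_of_mem_shifts {t i x : ℕ} {P Q R : Prop} [Decidable P] [Decidable Q]
    [Decidable R] (ht : 2 ≤ t)
    (hx : x ∈ (if P then ({i + 1} : Finset ℕ) else ∅) ∪
      (if Q then ({t + i - 1} : Finset ℕ) else ∅) ∪ (if R then ({t + i} : Finset ℕ) else ∅)) :
    i + 1 ≤ x := by
  simp only [mem_union] at hx
  rcases hx with (hx | hx) | hx <;> split_ifs at hx <;> simp only [mem_singleton, notMem_empty] at hx <;> omega

theorem cast_le_inv_factorial_mul_prod {b : ℤ} {c i : ℕ} {M : ℕ → ℕ} (hi : 1 ≤ i) (hic : i ≤ c)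
    (hb : b ≤ i * (c + 1).choose (i + 1)) (hM : ∀ j ∈ (Icc 1 c).erase i, j + 1 ≤ M j) :
    (b : ℚ) ≤ 1 / (((i - 1)! : ℚ) * ((c - i)! : ℚ)) * ∏ j ∈ (Icc 1 c).erase i, (M j : ℚ) := by
  have hprod : (i - 1)! * (c - i)! * (i * (c + 1).choose (i + 1)) ≤
      ∏ j ∈ (Icc 1 c).erase i, M j :=
    (Nat.factorial_mul_factorial_mul_choose_eq_prod_erase hi hic).trans_le (prod_le_prod' hM)
  have hbQ : (b : ℚ) ≤ i * (c + 1).choose (i + 1) := by exact_mod_cast hb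
  rw [one_div, inv_mul_eq_div, le_div_iff₀ (by positivity)]
  calc (b : ℚ) * ((i - 1)! * (c - i)!)
      ≤ i * (c + 1).choose (i + 1) * ((i - 1)! * (c - i)!) := by gcongr
    _ = (((i - 1)! * (c - i)! * (i * (c + 1).choose (i + 1)) : ℕ) : ℚ) := by push_cast; ring
    _ ≤ ∏ j ∈ (Icc 1 c).erase i, (M j : ℚ) := by exact_mod_cast hprod

theorem upper_bound_betti_divisor_minimal_degree_general (t c p : ℕ)
    (ht : 2 ≤ t) (hpc : p ≤ c)
    (α β' γ B : ℕ → ℤ)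
    (hα : ∀ i, α i = (i : ℤ) * (c.choose (i + 1)))
    (hβ1 : β' 1 = (p : ℤ))
    (hβ : ∀ i, 2 ≤ i → i ≤ p →
      β' i = (p : ℤ) * (c.choose (i - 1)) - (c : ℤ) * ((c - 1).choose (i - 2)))
    (hβ0 : ∀ i, p < i → β' i = 0)
    (hγ0 : ∀ i, i ≤ p → γ i = 0)
    (hγ : ∀ i, p < i → γ i = (c : ℤ) * ((c - 1).choose (i - 1)) - (p : ℤ) * (c.choose i))
    (hB : ∀ i, B i = α i + β' i + γ i)
    (S : ℕ → Finset ℕ)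
    (hS : ∀ i, S i =
      (if α i ≠ 0 then ({i + 1} : Finset ℕ) else ∅) ∪
      (if β' i ≠ 0 then ({t + i - 1} : Finset ℕ) else ∅) ∪
      (if γ i ≠ 0 then ({t + i} : Finset ℕ) else ∅))
    (M : ℕ → ℕ)
    (hMmem : ∀ i, 1 ≤ i → i ≤ c → M i ∈ S i) :
    ∀ i, 1 ≤ i → i ≤ c →
      (B i : ℚ) ≤ (1 / (((i - 1).factorial : ℚ) * ((c - i).factorial : ℚ))) *
        ∏ j ∈ (Finset.Icc 1 c).erase i, (M j : ℚ) := by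
  intro i hi hic
  have hM : ∀ j ∈ (Icc 1 c).erase i, j + 1 ≤ M j := fun j hj => by
    obtain ⟨hj1, hjc⟩ := mem_Icc.mp (mem_of_mem_erase hj)
    exact succ_le_of_mem_shifts ht (hS j ▸ hMmem j hj1 hjc)
  have hβγ : β' i + γ i ≤ c * (c - 1).choose (i - 1) := by
    rcases le_or_gt i p with hip | hpi
    · rw [hγ0 i hip, add_zero]
      obtain rfl | hi2 := hi.eq_or_lt
      · simpa [hβ1] using hpc
      · exact hβ i hi2 hip ▸ sub_mul_choose_le_mul_choose hpc hi2
    · rw [hβ0 i hpi, hγ i hpi, zero_add, sub_le_self_iff]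
      positivity
  have habsorb : (c : ℤ) * (c - 1).choose (i - 1) = i * c.choose i := by
    exact_mod_cast Nat.mul_choose_pred_pred hi
  have hBi : B i ≤ i * (c + 1).choose (i + 1) := by
    rw [hB, hα, Nat.choose_succ_succ']
    push_cast
    linarith
  exact cast_le_inv_factorial_mul_prod hi hic hBi hM

/-- Theorem 3.8, upper bound, arithmetic form, for a reduced arithmetically
Cohen–Macaulay divisor of degree `d = tc+1−p` on a variety of minimal degree of
codimension `c`: for every `1 ≤ i ≤ c` one has
`B i ≤ (1/((i−1)!·(c−i)!)) · ∏_{1≤j≤c, j≠i} M j`, where `B i` is the `i`-th total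
Betti number. -/
theorem upper_bound_betti_divisor_minimal_degree (t c p : ℕ)
    (ht : 2 ≤ t) (hc : 1 ≤ c) (hp1 : 1 ≤ p) (hpc : p ≤ c)
    (α β' γ B : ℕ → ℤ)
    (hα : ∀ i, α i = (i : ℤ) * (c.choose (i + 1)))
    (hβ1 : β' 1 = (p : ℤ))
    (hβ : ∀ i, 2 ≤ i → i ≤ p →
      β' i = (p : ℤ) * (c.choose (i - 1)) - (c : ℤ) * ((c - 1).choose (i - 2)))
    (hβ0 : ∀ i, p < i → β' i = 0)
    (hγ0 : ∀ i, i ≤ p → γ i = 0)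
    (hγ : ∀ i, p < i → γ i = (c : ℤ) * ((c - 1).choose (i - 1)) - (p : ℤ) * (c.choose i))
    (hB : ∀ i, B i = α i + β' i + γ i)
    (S : ℕ → Finset ℕ)
    (hS : ∀ i, S i =
      (if α i ≠ 0 then ({i + 1} : Finset ℕ) else ∅) ∪
      (if β' i ≠ 0 then ({t + i - 1} : Finset ℕ) else ∅) ∪
      (if γ i ≠ 0 then ({t + i} : Finset ℕ) else ∅))
    (m M : ℕ → ℕ)
    (hmmem : ∀ i, 1 ≤ i → i ≤ c → m i ∈ S i)
    (hmle : ∀ i, 1 ≤ i → i ≤ c → ∀ x ∈ S i, m i ≤ x)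
    (hMmem : ∀ i, 1 ≤ i → i ≤ c → M i ∈ S i)
    (hMge : ∀ i, 1 ≤ i → i ≤ c → ∀ x ∈ S i, x ≤ M i) :
    ∀ i, 1 ≤ i → i ≤ c →
      (B i : ℚ) ≤ (1 / (((i - 1).factorial : ℚ) * ((c - i).factorial : ℚ))) *
        ∏ j ∈ (Finset.Icc 1 c).erase i, (M j : ℚ) :=
  upper_bound_betti_divisor_minimal_degree_general t c p ht hpc α β' γ B hα hβ1 hβ hβ0 hγ0 hγ hB S
    hS M hMmem
end
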